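/- arXiv:2304.12054 — 5 statements merged into one kernel-verified Lean document; each statement's English description precedes it below -/
import Mathlib

section
/- Let 𝓛 be a finite-dimensional ℂ-vector space, X ⊆ 𝓛 an affine variety, and F a polynomial on 𝓛. (a) If 𝓛 = Sym₂(ℂ^m) and F = det, then MLD_det(X) equals the usual Gaussian ML degree of X, i.e. the number of complex critical points of K ↦ log det(K) − tr(KS) on X^sm ∖ V(det) for a general symmetric matrix S ∈ Sym₂(ℂ^m). (b) In general, there exist an integer m and an affine-linear embedding 𝒜 : 𝓛 → Sym₂(ℂ^m) such that MLD_F(X) = MLD_det(𝒜(X)). -/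
open MvPolynomial

noncomputable section

/-- Points of the affine space `ℂ^ι`. -/
abbrev Pt (ι : Type) := ι → ℂ

variable {ι κ : Type} [Fintype ι] [DecidableEq ι] [Fintype κ] [DecidableEq κ]

/-- The standard bilinear pairing identifying `ℂ^ι` with its dual. -/
def dotP (u v : Pt ι) : ℂ := ∑ i, u i * v i

/-- The gradient of a polynomial at a point. -/
def gradP (F : MvPolynomial ι ℂ) (p : Pt ι) : Pt ι := fun i => eval p (pderiv i F)

/-- The linear functional `v ↦ dotP u v`. -/
def dotL (u : Pt ι) : (Pt ι) →ₗ[ℂ] ℂ :=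
  ∑ i, u i • (LinearMap.proj i : (ι → ℂ) →ₗ[ℂ] ℂ)

/-- The vanishing ideal of a subset of `ℂ^ι`. -/
def vanIdeal (X : Set (Pt ι)) : Set (MvPolynomial ι ℂ) :=
  {f | ∀ x ∈ X, eval x f = 0}

/-- The common zero locus of a set of polynomials. -/
def zeroSet (I : Set (MvPolynomial ι ℂ)) : Set (Pt ι) := {x | ∀ f ∈ I, eval x f = 0}

/-- The Zariski closure of a subset of `ℂ^ι`. -/
def zarClosure (X : Set (Pt ι)) : Set (Pt ι) := zeroSet (vanIdeal X)

/-- An (embedded) affine variety: a Zariski closed subset of `ℂ^ι`. -/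
def IsAffineVariety (X : Set (Pt ι)) : Prop := X = zarClosure X

/-- The Zariski tangent space of `X` at `p`. -/
def tangentSpace (X : Set (Pt ι)) (p : Pt ι) : Submodule ℂ (Pt ι) :=
  ⨅ f ∈ vanIdeal X, LinearMap.ker (dotL (gradP f p))

/-- The smooth locus of an (irreducible) variety: the points where the Zariski
tangent space has minimal dimension. -/
def smoothLocus (X : Set (Pt ι)) : Set (Pt ι) :=
  {p | p ∈ X ∧ ∀ q ∈ X, Module.finrank ℂ (tangentSpace X p) ≤ Module.finrank ℂ (tangentSpace X q)}

/-- `p` is a critical point of the Gaussian log-likelihood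
`ℓ_{F,u} = log F - u` along `X`: it lies in the smooth locus, off `V(F)`, and the
differential of `ℓ_{F,u}` annihilates the tangent space of `X` at `p`. -/
def IsCriticalPoint (X : Set (Pt ι)) (F : MvPolynomial ι ℂ) (u : Pt ι) (p : Pt ι) : Prop :=
  p ∈ smoothLocus X ∧ eval p F ≠ 0 ∧
    ∀ v ∈ tangentSpace X p, dotP (gradP F p) v = eval p F * dotP u v

/-- A property holds generically (for general `u`) if it holds on the complement
of some hypersurface. -/
def Generically (P : Pt ι → Prop) : Prop :=
  ∃ h : MvPolynomial ι ℂ, h ≠ 0 ∧ ∀ u : Pt ι, eval u h ≠ 0 → P u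

/-- The (Gaussian) maximum likelihood degree of `X` with respect to `F` is `d`:
for general `u` the log-likelihood `ℓ_{F,u}` has exactly `d` critical points
on `X^sm ∖ V(F)`. -/
def MLDegreeIs (X : Set (Pt ι)) (F : MvPolynomial ι ℂ) (d : ℕ) : Prop :=
  Generically (fun u : Pt ι => {p | IsCriticalPoint X F u p}.ncard = d)

/-- A cone in `ℂ^ι` (the affine cone of a projective variety is such). -/
def IsCone (X : Set (Pt ι)) : Prop := ∀ t : ℂ, ∀ x ∈ X, t • x ∈ X

/-- An irreducible affine variety: nonempty, closed, with prime vanishing ideal. -/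
def IsIrreducibleVariety (X : Set (Pt ι)) : Prop :=
  IsAffineVariety X ∧ X.Nonempty ∧
    ∀ f g : MvPolynomial ι ℂ, (∀ x ∈ X, eval x f * eval x g = 0) →
      (∀ x ∈ X, eval x f = 0) ∨ ∀ x ∈ X, eval x g = 0

/-- A rational map `ℂ^ι ⇢ ℂ^κ`, given by numerator polynomials over a common
nonzero denominator. -/
structure RatMap (ι κ : Type) [Fintype ι] where
  num : κ → MvPolynomial ι ℂ
  den : MvPolynomial ι ℂ
  den_ne : den ≠ 0

/-- The locus where the rational map is defined. -/
def RatMap.isDefinedAt (Ψ : RatMap ι κ) (u : Pt ι) : Prop := eval u Ψ.den ≠ 0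

/-- Evaluation of a rational map. -/
def RatMap.eval (Ψ : RatMap ι κ) (u : Pt ι) : Pt κ :=
  fun i => MvPolynomial.eval u (Ψ.num i) / MvPolynomial.eval u Ψ.den

/-- The rational map `Ψ` maps into `C` with Zariski-dense image; i.e. it is a
dominant rational map onto `C`. -/
def RatMap.DominatesOnto (Ψ : RatMap ι κ) (C : Set (Pt κ)) : Prop :=
  (∀ u, Ψ.isDefinedAt u → Ψ.eval u ∈ C) ∧
    ∀ g : MvPolynomial κ ℂ, (∀ u, Ψ.isDefinedAt u → MvPolynomial.eval (Ψ.eval u) g = 0) →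
      ∀ x ∈ C, MvPolynomial.eval x g = 0

/-- `Ψ` is (a rational representation of) the maximum likelihood estimator of `X`
with respect to `F`: for general `u` its value is the unique critical point of the
log-likelihood `ℓ_{F,u}` along `X`. -/
def IsMLEof (X : Set (Pt ι)) (F : MvPolynomial ι ℂ) (Ψ : RatMap ι ι) : Prop :=
  Generically (fun u : Pt ι => Ψ.isDefinedAt u ∧ {p | IsCriticalPoint X F u p} = {Ψ.eval u})

end

noncomputable section

/-- The symmetric `m × m` matrix with entries given by coordinates indexed by
`Sym2 (Fin m)`; this identifies `ℂ^{Sym2(Fin m)}` with `Sym₂(ℂ^m)`. -/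
def matOf {m : ℕ} (x : Pt (Sym2 (Fin m))) : Matrix (Fin m) (Fin m) ℂ :=
  Matrix.of fun i j => x (Sym2.mk i j)

/-- The determinant as a polynomial function on `Sym₂(ℂ^m) = ℂ^{Sym2(Fin m)}`. -/
def detPolySym (m : ℕ) : MvPolynomial (Sym2 (Fin m)) ℂ :=
  Matrix.det
    (Matrix.of fun i j : Fin m =>
      (MvPolynomial.X (Sym2.mk i j) : MvPolynomial (Sym2 (Fin m)) ℂ))

end


/-!
(a) `tr (matOf v * matOf s) = dotP (traceDual m s) v`, where `traceDual` rescales each coordinate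
of `Sym₂(ℂ^m)` by the number of ordered pairs `(i, j)` representing it. So the usual count at `s`
is the `MLDegreeIs` count at `traceDual m s`, and genericity survives this invertible linear
substitution.

(b) By induction on `F`, `F = v ⬝ᵥ A⁻¹ *ᵥ u` with `A, u, v` affine and `det A = 1`, so
`-F = det M` for the affine matrix `M = [[A, u], [vᵀ, 0]]`. The symmetric matrix
`[[0, M], [Mᵀ, 0]]`, enlarged by blocks `[[x a, 1], [1, 0]]` that make it injective, is an affine
embedding `𝒜 : ℂ^k → Sym₂(ℂ^m)` with `det ∘ 𝒜 = c F ^ 2`. Along it, `log det - S` pulls back to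
`2 (log F - u)` up to a constant, with `u = 𝒜ᵗ S / 2`. Tangent spaces of `𝒜 '' X` are the images
of those of `X`, so critical points correspond bijectively, and `S ↦ 𝒜ᵗ S / 2` is surjective,
hence preserves genericity.
-/

open Matrix

theorem MvPolynomial.pderiv_bind₁ {R σ τ : Type*} [CommSemiring R] [Fintype τ]
    (φ : τ → MvPolynomial σ R) (g : MvPolynomial τ R) (i : σ) :
    pderiv i (bind₁ φ g) = ∑ e, bind₁ φ (pderiv e g) * pderiv i (φ e) := by
  classical
  induction g using MvPolynomial.induction_on with
  | C c => simp
  | add f g hf hg => simp only [map_add, hf, hg, add_mul, Finset.sum_add_distrib]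
  | mul_X g e hg =>
    simp only [map_mul, bind₁_X_right, Derivation.leibniz, hg, pderiv_X, Pi.single_apply,
      smul_eq_mul, mul_ite, mul_one, mul_zero, apply_ite (bind₁ φ), map_zero, map_add, add_mul,
      Finset.sum_add_distrib, Finset.mul_sum, ite_mul, zero_mul, Finset.sum_ite_eq,
      Finset.mem_univ, if_true, mul_assoc]

theorem MvPolynomial.exists_eval_ne_zero {R σ : Type*} [CommRing R] [IsDomain R] [Infinite R]
    {h : MvPolynomial σ R} (hh : h ≠ 0) : ∃ x, eval x h ≠ 0 := by
  by_contra! hzero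
  exact hh (MvPolynomial.funext fun x => by simpa using hzero x)

theorem AffineMap.exists_leftInverse_of_injective {K V W : Type*} [DivisionRing K]
    [AddCommGroup V] [Module K V] [AddCommGroup W] [Module K W] {A : V →ᵃ[K] W}
    (hA : Function.Injective A) : ∃ B : W →ᵃ[K] V, ∀ x, B (A x) = x := by
  obtain ⟨Bl, hBl⟩ := A.linear.exists_leftInverse_of_injective
    (LinearMap.ker_eq_bot.2 (A.linear_injective_iff.2 hA))
  refine ⟨Bl.toAffineMap - AffineMap.const K W (Bl (A 0)), fun x => ?_⟩
  have hx : A x = A.linear x + A 0 := by simpa using A.map_vadd 0 x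
  simpa [hx] using LinearMap.congr_fun hBl x

lemma Matrix.det_fromBlocks_zero_transpose {n R : Type*} [Fintype n] [DecidableEq n]
    [CommRing R] (B : Matrix n n R) :
    (fromBlocks 0 B Bᵀ 0).det
      = (fromBlocks 0 1 1 0 : Matrix (n ⊕ n) (n ⊕ n) R).det * B.det ^ 2 := by
  have hfactor : fromBlocks 0 B Bᵀ 0 = fromBlocks B 0 0 Bᵀ * fromBlocks 0 1 1 0 := by
    simp [fromBlocks_multiply]
  rw [hfactor, det_mul, det_fromBlocks_zero₂₁, det_transpose]
  ring

lemma Matrix.det_fromBlocks_zero_one_ne_zero {n K : Type*} [Fintype n] [DecidableEq n] [Field K] :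
    (fromBlocks 0 1 1 0 : Matrix (n ⊕ n) (n ⊕ n) K).det ≠ 0 := by
  have hsq : (fromBlocks 0 1 1 0 : Matrix (n ⊕ n) (n ⊕ n) K) * fromBlocks 0 1 1 0 = 1 := by
    simp [fromBlocks_multiply, ← fromBlocks_one]
  intro h
  simpa [h] using congrArg det hsq

namespace GaussianMLDegree

section Gradients

variable {ι κ : Type} [Fintype ι]

lemma dotP_eq_dotProduct (u v : Pt ι) : dotP u v = u ⬝ᵥ v := rfl

lemma mem_tangentSpace_iff {X : Set (Pt ι)} {p w : Pt ι} :
    w ∈ tangentSpace X p ↔ ∀ f ∈ vanIdeal X, dotP (gradP f p) w = 0 := by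
  simp [tangentSpace, dotL, dotP, Finset.sum_apply]

lemma dotP_gradP_sub (f g : MvPolynomial ι ℂ) (p v : Pt ι) :
    dotP (gradP (f - g) p) v = dotP (gradP f p) v - dotP (gradP g p) v := by
  simp [dotP, gradP, sub_mul]

omit [Fintype ι] in
lemma gradP_C_mul_pow (c : ℂ) (F : MvPolynomial ι ℂ) (n : ℕ) (p : Pt ι) :
    gradP (C c * F ^ n) p = (c * n * eval p F ^ (n - 1)) • gradP F p := by
  ext i
  simp only [gradP, pderiv_C_mul, pderiv_pow, eval_mul, eval_C, eval_pow, map_natCast,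
    Pi.smul_apply, smul_eq_mul]
  ring

variable [DecidableEq ι]

lemma dotP_gradP_X (i : ι) (p v : Pt ι) : dotP (gradP (X i) p) v = v i := by
  simp [dotP, gradP, pderiv_X, Pi.single_apply]

noncomputable def affineCoords (A : Pt ι →ᵃ[ℂ] Pt κ) (e : κ) : MvPolynomial ι ℂ :=
  C (A 0 e) + ∑ i, C (A.linear (Pi.single i 1) e) * X i

lemma eval_affineCoords (A : Pt ι →ᵃ[ℂ] Pt κ) (x : Pt ι) (e : κ) :
    eval x (affineCoords A e) = A x e := by
  have hx : A x = A.linear x + A 0 := by simpa using A.map_vadd 0 x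
  rw [hx]
  conv_rhs => rw [pi_eq_sum_univ' x]
  simp [affineCoords, add_comm, mul_comm]

lemma pderiv_affineCoords (A : Pt ι →ᵃ[ℂ] Pt κ) (e : κ) (i : ι) :
    pderiv i (affineCoords A e) = C (A.linear (Pi.single i 1) e) := by
  simp [affineCoords, pderiv_X, Pi.single_apply]

noncomputable def pullback (A : Pt ι →ᵃ[ℂ] Pt κ) (f : MvPolynomial κ ℂ) : MvPolynomial ι ℂ :=
  bind₁ (affineCoords A) f

lemma eval_pullback (A : Pt ι →ᵃ[ℂ] Pt κ) (f : MvPolynomial κ ℂ) (x : Pt ι) :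
    eval x (pullback A f) = eval (A x) f := by
  change aeval x (bind₁ _ f) = aeval (A x) f
  rw [aeval_bind₁]
  exact congrArg (aeval · f) (funext (eval_affineCoords A x))

lemma dotP_gradP_pullback [Fintype κ] (A : Pt ι →ᵃ[ℂ] Pt κ) (f : MvPolynomial κ ℂ)
    (x v : Pt ι) : dotP (gradP (pullback A f) x) v = dotP (gradP f (A x)) (A.linear v) := by
  have hgrad : ∀ i, gradP (pullback A f) x i
      = ∑ e, gradP f (A x) e * A.linear (Pi.single i 1) e := by
    intro i
    simp only [gradP, pullback, pderiv_bind₁, pderiv_affineCoords, map_sum, eval_mul, eval_C]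
    exact Finset.sum_congr rfl fun e _ => by rw [← pullback, eval_pullback]
  conv_rhs => rw [pi_eq_sum_univ' v]
  simp only [dotP, hgrad, map_sum, map_smul, Finset.sum_apply, Pi.smul_apply, smul_eq_mul,
    Finset.sum_mul, Finset.mul_sum]
  rw [Finset.sum_comm]
  exact Finset.sum_congr rfl fun _ _ => Finset.sum_congr rfl fun _ _ => by ring

end Gradients

section Genericity

variable {ι κ : Type} [Fintype ι] [DecidableEq ι]

lemma generically_comp_of_eval_ne_zero {P : Pt κ → Prop} {h : MvPolynomial κ ℂ}
    (hP : ∀ u, eval u h ≠ 0 → P u) (A : Pt ι →ᵃ[ℂ] Pt κ) {x₀ : Pt ι}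
    (hx₀ : eval (A x₀) h ≠ 0) : Generically (P ∘ A) := by
  refine ⟨pullback A h, fun h0 => hx₀ ?_, fun x hx => hP _ ?_⟩
  · rw [← eval_pullback, h0, map_zero]
  · rwa [eval_pullback] at hx

lemma generically_comp_iff [Fintype κ] [DecidableEq κ] {T : Pt κ →ₗ[ℂ] Pt ι}
    (hT : Function.Surjective T) {P : Pt ι → Prop} : Generically (P ∘ T) ↔ Generically P := by
  constructor
  · rintro ⟨h, h0, hP⟩
    obtain ⟨z₀, hz₀⟩ := exists_eval_ne_zero h0
    obtain ⟨σ, hσ⟩ := T.exists_rightInverse_of_surjective (LinearMap.range_eq_top.2 hT)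
    have hTσ : ∀ u, T (σ u) = u := LinearMap.congr_fun hσ
    -- a section of `T` through a point off `V(h)`, so that `h` does not vanish on it
    let S : Pt ι →ᵃ[ℂ] Pt κ := σ.toAffineMap + AffineMap.const ℂ _ (z₀ - σ (T z₀))
    have hS : ∀ u, S u = σ u + (z₀ - σ (T z₀)) := fun _ => rfl
    have hTS : (P ∘ T) ∘ S = P := by
      funext u
      simp [hS, hTσ]
    rw [← hTS]
    exact generically_comp_of_eval_ne_zero hP S (x₀ := T z₀) (by simpa [hS] using hz₀)
  · rintro ⟨h, h0, hP⟩
    obtain ⟨u₀, hu₀⟩ := exists_eval_ne_zero h0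
    obtain ⟨z₀, rfl⟩ := hT u₀
    exact generically_comp_of_eval_ne_zero hP T.toAffineMap hu₀

end Genericity

section Transpose

variable {ι κ : Type} [Fintype ι] [DecidableEq ι] [Fintype κ]

noncomputable def dotTranspose (L : Pt ι →ₗ[ℂ] Pt κ) : Pt κ →ₗ[ℂ] Pt ι :=
  (LinearMap.toMatrix' L).vecMulLinear

lemma dotP_dotTranspose (L : Pt ι →ₗ[ℂ] Pt κ) (S : Pt κ) (v : Pt ι) :
    dotP (dotTranspose L S) v = dotP S (L v) := by
  change vecMul S _ ⬝ᵥ v = S ⬝ᵥ L v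
  rw [← dotProduct_mulVec, LinearMap.toMatrix'_mulVec]

lemma dotTranspose_surjective {L : Pt ι →ₗ[ℂ] Pt κ} (hL : Function.Injective L) :
    Function.Surjective (dotTranspose L) := by
  rw [← LinearMap.range_eq_top]
  apply Submodule.eq_top_of_finrank_eq
  have hrank := rank_transpose (LinearMap.toMatrix' L)
  rwa [rank, rank, mulVecLin_transpose, ← toLin'_apply', toLin'_toMatrix',
    LinearMap.finrank_range_of_inj hL] at hrank

end Transpose

section AffineImage

variable {ι κ : Type} [Fintype ι] [DecidableEq ι] [Fintype κ] [DecidableEq κ]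

omit [DecidableEq κ] in
lemma map_tangentSpace_le {X : Set (Pt ι)} {Y : Set (Pt κ)} (A : Pt ι →ᵃ[ℂ] Pt κ)
    (hXY : Set.MapsTo A X Y) (x : Pt ι) :
    (tangentSpace X x).map A.linear ≤ tangentSpace Y (A x) := by
  rintro _ ⟨v, hv, rfl⟩
  rw [SetLike.mem_coe, mem_tangentSpace_iff] at hv
  rw [mem_tangentSpace_iff]
  intro g hg
  rw [← dotP_gradP_pullback]
  exact hv _ fun x' hx' => by rw [eval_pullback]; exact hg _ (hXY hx')

omit [DecidableEq ι] in
lemma linear_apply_eq_of_mem_tangentSpace {Y : Set (Pt κ)} (R : Pt κ →ᵃ[ℂ] Pt κ)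
    (hR : ∀ y ∈ Y, R y = y) {p w : Pt κ} (hw : w ∈ tangentSpace Y p) : R.linear w = w := by
  funext e
  have hvan : X e - pullback R (X e) ∈ vanIdeal Y := fun y hy => by
    rw [map_sub, eval_pullback, hR y hy, sub_self]
  have h := mem_tangentSpace_iff.1 hw _ hvan
  rwa [dotP_gradP_sub, dotP_gradP_X, dotP_gradP_pullback, dotP_gradP_X, sub_eq_zero,
    eq_comm] at h

lemma tangentSpace_image {A : Pt ι →ᵃ[ℂ] Pt κ} (hA : Function.Injective A) (X : Set (Pt ι))
    (x : Pt ι) : tangentSpace (A '' X) (A x) = (tangentSpace X x).map A.linear := by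
  refine le_antisymm (fun w hw => ?_) (map_tangentSpace_le A (Set.mapsTo_image A X) x)
  obtain ⟨B, hB⟩ := AffineMap.exists_leftInverse_of_injective hA
  have hBX : Set.MapsTo B (A '' X) X := by
    rintro _ ⟨x', hx', rfl⟩
    rwa [hB]
  have hBw : B.linear w ∈ tangentSpace X x := by
    simpa [hB] using map_tangentSpace_le B hBX (A x) (Submodule.mem_map_of_mem hw)
  have hABw : A.linear (B.linear w) = w := by
    refine linear_apply_eq_of_mem_tangentSpace (A.comp B) ?_ hw
    rintro _ ⟨x', -, rfl⟩
    rw [AffineMap.comp_apply, hB]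
  exact hABw ▸ Submodule.mem_map_of_mem hBw

lemma image_mem_smoothLocus_iff {A : Pt ι →ᵃ[ℂ] Pt κ} (hA : Function.Injective A)
    {X : Set (Pt ι)} {x : Pt ι} : A x ∈ smoothLocus (A '' X) ↔ x ∈ smoothLocus X := by
  have hrank : ∀ x', Module.finrank ℂ (tangentSpace (A '' X) (A x'))
      = Module.finrank ℂ (tangentSpace X x') := fun x' => by
    rw [tangentSpace_image hA]
    exact (Submodule.equivMapOfInjective _ (A.linear_injective_iff.2 hA) _).finrank_eq.symm
  simp [smoothLocus, hA.eq_iff, hrank]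

variable {A : Pt ι →ᵃ[ℂ] Pt κ} {G : MvPolynomial κ ℂ} {F : MvPolynomial ι ℂ} {c : ℂ} {n : ℕ}

lemma isCriticalPoint_image_iff (hA : Function.Injective A) (hc : c ≠ 0) (hn : n ≠ 0)
    (hGA : ∀ x, eval (A x) G = c * eval x F ^ n) (X : Set (Pt ι)) (S : Pt κ) (x : Pt ι) :
    IsCriticalPoint (A '' X) G S (A x) ↔
      IsCriticalPoint X F ((n : ℂ)⁻¹ • dotTranspose A.linear S) x := by
  have hn' : (n : ℂ) ≠ 0 := Nat.cast_ne_zero.2 hn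
  have hpull : pullback A G = C c * F ^ n :=
    MvPolynomial.funext fun x' => by simp [eval_pullback, hGA]
  have hgrad : ∀ v, dotP (gradP G (A x)) (A.linear v)
      = c * n * eval x F ^ (n - 1) * dotP (gradP F x) v := fun v => by
    rw [← dotP_gradP_pullback, hpull, gradP_C_mul_pow, dotP_eq_dotProduct, smul_dotProduct,
      smul_eq_mul, dotP_eq_dotProduct]
  have hS : ∀ v, dotP S (A.linear v)
      = n * dotP ((n : ℂ)⁻¹ • dotTranspose A.linear S) v := fun v => by
    rw [← dotP_dotTranspose, dotP_eq_dotProduct, dotP_eq_dotProduct, smul_dotProduct,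
      smul_eq_mul, ← mul_assoc, mul_inv_cancel₀ hn', one_mul]
  simp only [IsCriticalPoint, image_mem_smoothLocus_iff hA, tangentSpace_image hA, hGA,
    Submodule.mem_map, forall_exists_index, and_imp, forall_apply_eq_imp_iff₂, hgrad, hS]
  refine and_congr_right fun _ => ?_
  rw [show c * eval x F ^ n ≠ 0 ↔ eval x F ≠ 0 by simp [hc, hn]]
  refine and_congr_right fun hF => forall₂_congr fun v _ => ?_
  rw [← pow_sub_one_mul hn]
  constructor
  · intro h
    apply mul_left_cancel₀ (mul_ne_zero (mul_ne_zero hc hn') (pow_ne_zero _ hF))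
    linear_combination h
  · intro h
    linear_combination (c * n * eval x F ^ (n - 1)) * h

theorem mlDegreeIs_image_iff (hA : Function.Injective A) (hc : c ≠ 0) (hn : n ≠ 0)
    (hGA : ∀ x, eval (A x) G = c * eval x F ^ n) (X : Set (Pt ι)) (d : ℕ) :
    MLDegreeIs (A '' X) G d ↔ MLDegreeIs X F d := by
  have hcrit : ∀ S, {q | IsCriticalPoint (A '' X) G S q}
      = A '' {x | IsCriticalPoint X F ((n : ℂ)⁻¹ • dotTranspose A.linear S) x} := fun S => by
    ext q
    constructor
    · intro hq
      obtain ⟨x, -, rfl⟩ := hq.1.1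
      exact ⟨x, (isCriticalPoint_image_iff hA hc hn hGA X S x).1 hq, rfl⟩
    · rintro ⟨x, hx, rfl⟩
      exact (isCriticalPoint_image_iff hA hc hn hGA X S x).2 hx
  have hT : Function.Surjective ((n : ℂ)⁻¹ • dotTranspose A.linear) := fun u => by
    obtain ⟨S, hS⟩ := dotTranspose_surjective (A.linear_injective_iff.2 hA) ((n : ℂ) • u)
    exact ⟨S, by simp [hS, inv_smul_smul₀ (Nat.cast_ne_zero.2 hn : (n : ℂ) ≠ 0)]⟩
  simp only [MLDegreeIs, hcrit, Set.ncard_image_of_injective _ hA]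
  exact generically_comp_iff (P := fun u => {x | IsCriticalPoint X F u x}.ncard = d) hT

end AffineImage

section Trace

variable {m : ℕ}

def sym2Mult (e : Sym2 (Fin m)) : ℂ :=
  (Finset.univ.filter fun p : Fin m × Fin m => Sym2.mk p.1 p.2 = e).card

lemma sym2Mult_ne_zero (e : Sym2 (Fin m)) : sym2Mult e ≠ 0 := by
  induction e using Sym2.ind with
  | _ i j =>
    rw [sym2Mult, Nat.cast_ne_zero, ← Nat.pos_iff_ne_zero, Finset.card_pos]
    exact ⟨(i, j), by simp⟩

noncomputable def traceDual (m : ℕ) : Pt (Sym2 (Fin m)) →ₗ[ℂ] Pt (Sym2 (Fin m)) :=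
  LinearMap.pi fun e => sym2Mult e • LinearMap.proj e

lemma traceDual_surjective : Function.Surjective (traceDual m) := fun u =>
  ⟨fun e => (sym2Mult e)⁻¹ * u e, funext fun e => by
    simp [traceDual, ← mul_assoc, mul_inv_cancel₀ (sym2Mult_ne_zero e)]⟩

lemma trace_matOf_mul_matOf (v s : Pt (Sym2 (Fin m))) :
    trace (matOf v * matOf s) = dotP (traceDual m s) v := by
  have hpairs : trace (matOf v * matOf s)
      = ∑ p : Fin m × Fin m, (fun e => s e * v e) (Sym2.mk p.1 p.2) := by
    simp only [trace, diag, mul_apply, matOf, of_apply, Fintype.sum_prod_type, Sym2.eq_swap,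
      mul_comm]
  have himage : Finset.univ.image (fun p : Fin m × Fin m => Sym2.mk p.1 p.2) = Finset.univ :=
    Finset.eq_univ_of_forall fun e => e.ind fun i j => Finset.mem_image.2 ⟨(i, j), by simp⟩
  rw [hpairs, Finset.sum_comp (fun e => s e * v e) (fun p : Fin m × Fin m => Sym2.mk p.1 p.2),
    himage]
  simp [dotP, traceDual, sym2Mult, mul_assoc]

theorem mlDegreeIs_iff_trace (X : Set (Pt (Sym2 (Fin m)))) (G : MvPolynomial (Sym2 (Fin m)) ℂ)
    (d : ℕ) :
    MLDegreeIs X G d ↔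
      ∃ h : MvPolynomial (Sym2 (Fin m)) ℂ, h ≠ 0 ∧ ∀ s, eval s h ≠ 0 →
        {p | p ∈ smoothLocus X ∧ eval p G ≠ 0 ∧ ∀ v ∈ tangentSpace X p,
          dotP (gradP G p) v = eval p G * trace (matOf v * matOf s)}.ncard = d := by
  simp only [trace_matOf_mul_matOf]
  exact (generically_comp_iff (P := fun u => {p | IsCriticalPoint X G u p}.ncard = d)
    traceDual_surjective).symm

end Trace

section DeterminantalRepresentation

variable {ι : Type}

structure BorderedRep (f : Pt ι → ℂ) where
  N : Type
  [fintype : Fintype N]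
  [decEq : DecidableEq N]
  A : Matrix N N (Pt ι →ᵃ[ℂ] ℂ)
  u : N → Pt ι →ᵃ[ℂ] ℂ
  v : N → Pt ι →ᵃ[ℂ] ℂ
  det_eq_one : ∀ x, (A.map (· x)).det = 1
  apply_eq : ∀ x, (v · x) ⬝ᵥ (A.map (· x))⁻¹ *ᵥ (u · x) = f x

attribute [instance] BorderedRep.fintype BorderedRep.decEq

lemma map_diagonal_const_one {n : Type} [DecidableEq n] (x : Pt ι) :
    (diagonal fun _ : n => AffineMap.const ℂ (Pt ι) (1 : ℂ)).map (· x) = 1 :=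
  (diagonal_map rfl).trans diagonal_one

namespace BorderedRep

variable {f g : Pt ι → ℂ}

lemma isUnit_map (r : BorderedRep f) (x : Pt ι) : IsUnit (r.A.map (· x)) := by
  rw [isUnit_iff_isUnit_det, r.det_eq_one]
  exact isUnit_one

noncomputable def const (c : ℂ) : BorderedRep fun _ : Pt ι => c where
  N := Unit
  A := diagonal fun _ => AffineMap.const ℂ _ 1
  u _ := AffineMap.const ℂ _ c
  v _ := AffineMap.const ℂ _ 1
  det_eq_one x := by rw [map_diagonal_const_one, det_one]
  apply_eq x := by simp

noncomputable def add (r : BorderedRep f) (s : BorderedRep g) :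
    BorderedRep fun x => f x + g x where
  N := r.N ⊕ s.N
  A := fromBlocks r.A 0 0 s.A
  u := Sum.elim r.u s.u
  v := Sum.elim r.v s.v
  det_eq_one x := by
    simp [fromBlocks_map, det_fromBlocks_zero₂₁, r.det_eq_one, s.det_eq_one]
  apply_eq x := by
    have h0 : (0 : Matrix r.N s.N (Pt ι →ᵃ[ℂ] ℂ)).map (· x) = 0 := by ext; rfl
    have h0' : (0 : Matrix s.N r.N (Pt ι →ᵃ[ℂ] ℂ)).map (· x) = 0 := by ext; rfl
    have hu : (fun i => Sum.elim r.u s.u i x) = Sum.elim (r.u · x) (s.u · x) := by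
      ext (i | i) <;> rfl
    have hv : (fun i => Sum.elim r.v s.v i x) = Sum.elim (r.v · x) (s.v · x) := by
      ext (i | i) <;> rfl
    rw [fromBlocks_map, h0, h0', hu, hv, inv_fromBlocks_zero₂₁_of_isUnit_iff _ _ _
      (iff_of_true (r.isUnit_map x) (s.isUnit_map x))]
    simp [fromBlocks_mulVec, r.apply_eq, s.apply_eq]

noncomputable def mulAffine (r : BorderedRep f) (l : Pt ι →ᵃ[ℂ] ℂ) :
    BorderedRep fun x => f x * l x where
  N := r.N ⊕ Unit
  A := fromBlocks r.A (of fun i (_ : Unit) => -r.u i) 0 (diagonal fun _ => AffineMap.const ℂ _ 1)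
  u := Sum.elim 0 fun _ => l
  v := Sum.elim r.v 0
  det_eq_one x := by
    simp [fromBlocks_map, r.det_eq_one]
  apply_eq x := by
    have h0 : (0 : Matrix Unit r.N (Pt ι →ᵃ[ℂ] ℂ)).map (· x) = 0 := by ext; rfl
    have hu : (fun i => Sum.elim (0 : r.N → Pt ι →ᵃ[ℂ] ℂ) (fun _ : Unit => l) i x)
        = Sum.elim (0 : r.N → ℂ) (fun _ : Unit => l x) := by
      ext (i | i) <;> rfl
    have hv : (fun i => Sum.elim r.v (0 : Unit → Pt ι →ᵃ[ℂ] ℂ) i x)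
        = Sum.elim (r.v · x) (0 : Unit → ℂ) := by
      ext (i | i) <;> rfl
    rw [fromBlocks_map, h0, map_diagonal_const_one, hu, hv,
      inv_fromBlocks_zero₂₁_of_isUnit_iff _ _ _ (iff_of_true (r.isUnit_map x) isUnit_one),
      ← r.apply_eq x]
    simp [mulVec, dotProduct, mul_apply, Finset.sum_mul, mul_assoc]

def borderedMatrix (r : BorderedRep f) : Matrix (r.N ⊕ Unit) (r.N ⊕ Unit) (Pt ι →ᵃ[ℂ] ℂ) :=
  fromBlocks r.A (of fun i _ => r.u i) (of fun _ j => r.v j) 0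

lemma det_borderedMatrix (r : BorderedRep f) (x : Pt ι) :
    (r.borderedMatrix.map (· x)).det = -f x := by
  let := (r.isUnit_map x).invertible
  rw [borderedMatrix, fromBlocks_map, det_fromBlocks₁₁, r.det_eq_one, one_mul, det_unique,
    invOf_eq_nonsing_inv, ← r.apply_eq x]
  simp [mulVec, dotProduct, mul_apply, Finset.sum_mul, Finset.mul_sum, mul_assoc]
  exact Finset.sum_comm

end BorderedRep

theorem nonempty_borderedRep (F : MvPolynomial ι ℂ) :
    Nonempty (BorderedRep fun x => eval x F) := by
  induction F using MvPolynomial.induction_on with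
  | C c => simpa only [eval_C] using ⟨BorderedRep.const c⟩
  | add p q hp hq => simpa only [map_add] using ⟨hp.some.add hq.some⟩
  | mul_X p a hp =>
    simpa only [eval_mul, eval_X] using
      ⟨hp.some.mulAffine (LinearMap.proj a : Pt ι →ₗ[ℂ] ℂ).toAffineMap⟩

noncomputable def coordBlock (a : ι) : Matrix (Fin 2) (Fin 2) (Pt ι →ᵃ[ℂ] ℂ) :=
  !![(LinearMap.proj a : Pt ι →ₗ[ℂ] ℂ).toAffineMap, AffineMap.const ℂ _ 1;
    AffineMap.const ℂ _ 1, 0]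

lemma det_coordBlock (a : ι) (x : Pt ι) : ((coordBlock a).map (· x)).det = -1 := by
  simp [coordBlock, det_fin_two]

lemma isSymm_coordBlock (a : ι) : (coordBlock a).IsSymm := by
  ext i j
  fin_cases i <;> fin_cases j <;> rfl

theorem exists_isSymm_det_eq_mul_sq [Fintype ι] [DecidableEq ι] (F : MvPolynomial ι ℂ) :
    ∃ (m : ℕ) (E : Matrix (Fin m) (Fin m) (Pt ι →ᵃ[ℂ] ℂ)) (c : ℂ), E.IsSymm ∧ c ≠ 0 ∧
      (∀ x, (E.map (· x)).det = c * eval x F ^ 2) ∧ ∀ a, ∃ i, ∀ x, E i i x = x a := by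
  obtain ⟨r⟩ := nonempty_borderedRep F
  let M := r.borderedMatrix
  let E₀ := fromBlocks (fromBlocks 0 M Mᵀ 0) 0 0 (blockDiagonal coordBlock)
  let e := Fintype.equivFin (((r.N ⊕ Unit) ⊕ (r.N ⊕ Unit)) ⊕ Fin 2 × ι)
  have hsymm : E₀.IsSymm := by
    refine IsSymm.fromBlocks (IsSymm.fromBlocks isSymm_zero rfl isSymm_zero) transpose_zero ?_
    rw [IsSymm, blockDiagonal_transpose]
    exact congrArg blockDiagonal (funext fun a => isSymm_coordBlock a)
  refine ⟨_, E₀.submatrix e.symm e.symm,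
    (fromBlocks 0 1 1 0 : Matrix ((r.N ⊕ Unit) ⊕ (r.N ⊕ Unit)) _ ℂ).det * (-1) ^ Fintype.card ι,
    hsymm.submatrix _, mul_ne_zero det_fromBlocks_zero_one_ne_zero (by simp), fun x => ?_,
    fun a => ⟨e (Sum.inr (0, a)), fun x => by simp [E₀, coordBlock]⟩⟩
  rw [← submatrix_map, det_submatrix_equiv_self]
  simp [E₀, M, fromBlocks_map, transpose_map, blockDiagonal_map, det_fromBlocks_zero₂₁,
    det_fromBlocks_zero_transpose, det_blockDiagonal, det_coordBlock, r.det_borderedMatrix]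
  ring

end DeterminantalRepresentation

section SymmetricEmbedding

variable {ι : Type} {m : ℕ}

noncomputable def symAffineMap (E : Matrix (Fin m) (Fin m) (Pt ι →ᵃ[ℂ] ℂ)) (hE : E.IsSymm) :
    Pt ι →ᵃ[ℂ] Pt (Sym2 (Fin m)) :=
  AffineMap.pi (Sym2.lift ⟨fun i j => E i j, fun i j => (hE.apply i j).symm⟩)

lemma matOf_symAffineMap (E : Matrix (Fin m) (Fin m) (Pt ι →ᵃ[ℂ] ℂ)) (hE : E.IsSymm)
    (x : Pt ι) : matOf (symAffineMap E hE x) = E.map (· x) := by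
  ext i j
  simp [matOf, symAffineMap, AffineMap.pi_apply]

lemma eval_detPolySym (y : Pt (Sym2 (Fin m))) : eval y (detPolySym m) = (matOf y).det := by
  rw [detPolySym, RingHom.map_det]
  congr 1
  ext i j
  simp [matOf]

theorem exists_injective_affineMap_eval_detPolySym [Fintype ι] [DecidableEq ι]
    (F : MvPolynomial ι ℂ) :
    ∃ (m : ℕ) (A : Pt ι →ᵃ[ℂ] Pt (Sym2 (Fin m))) (c : ℂ), Function.Injective A ∧ c ≠ 0 ∧
      ∀ x, eval (A x) (detPolySym m) = c * eval x F ^ 2 := by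
  obtain ⟨m, E, c, hE, hc, hdet, hcoord⟩ := exists_isSymm_det_eq_mul_sq F
  refine ⟨m, symAffineMap E hE, c, fun x y hxy => funext fun a => ?_, hc, fun x => ?_⟩
  · obtain ⟨i, hi⟩ := hcoord a
    simpa [matOf_symAffineMap, hi] using congrArg (fun z => matOf z i i) hxy
  · rw [eval_detPolySym, matOf_symAffineMap, hdet]

end SymmetricEmbedding

end GaussianMLDegree

/-- **Proposition (the coordinate-free ML degree agrees with the usual Gaussian ML degree).**
(a) For a subvariety `X ⊆ Sym₂(ℂ^m)`, the ML degree `MLD_det(X)` equals the usual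
Gaussian ML degree of `X`: the number of critical points of
`K ↦ log det K − tr(K S)` on `X^sm ∖ V(det)` for a general symmetric matrix `S`.
(b) For any finite dimensional `𝓛`, any subvariety `X ⊆ 𝓛` and any polynomial `F`
on `𝓛`, there are `m` and an injective affine map `𝒜 : 𝓛 → Sym₂(ℂ^m)` with
`MLD_F(X) = MLD_det(𝒜(X))`. -/
theorem mld_eq_usual_gaussian_mld :
    -- (a)
    (∀ (m : ℕ) (Xv : Set (Pt (Sym2 (Fin m)))), IsAffineVariety Xv → ∀ d : ℕ,
      MLDegreeIs Xv (detPolySym m) d ↔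
        ∃ h : MvPolynomial (Sym2 (Fin m)) ℂ, h ≠ 0 ∧
          ∀ s : Pt (Sym2 (Fin m)), MvPolynomial.eval s h ≠ 0 →
            {p | p ∈ smoothLocus Xv ∧ MvPolynomial.eval p (detPolySym m) ≠ 0 ∧
              ∀ v ∈ tangentSpace Xv p,
                dotP (gradP (detPolySym m) p) v
                  = MvPolynomial.eval p (detPolySym m) *
                      Matrix.trace (matOf v * matOf s)}.ncard = d) ∧
    -- (b)
    (∀ (k : ℕ) (X : Set (Pt (Fin k))) (F : MvPolynomial (Fin k) ℂ),
      IsAffineVariety X →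
        ∃ (m : ℕ) (A : Pt (Fin k) →ᵃ[ℂ] Pt (Sym2 (Fin m))),
          Function.Injective A ∧
          ∀ d : ℕ, MLDegreeIs X F d ↔ MLDegreeIs (⇑A '' X) (detPolySym m) d) := by
  refine ⟨fun m Xv _ d => GaussianMLDegree.mlDegreeIs_iff_trace Xv (detPolySym m) d,
    fun k X F _ => ?_⟩
  obtain ⟨m, A, c, hA, hc, hdet⟩ := GaussianMLDegree.exists_injective_affineMap_eval_detPolySym F
  exact ⟨m, A, hA, fun d =>
    (GaussianMLDegree.mlDegreeIs_image_iff hA hc two_ne_zero hdet X d).symm⟩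
end

section
/- Let (p₁,…,pₙ) be a basis of a finite-dimensional ℂ-vector space 𝓛 and (ℓ₁,…,ℓₙ) the dual basis of 𝓛*. Let F := ∏ᵢ₌₁ⁿ ℓᵢ^{aᵢ} with integers aᵢ ≥ 0. Then F is homaloidal if and only if aᵢ ≥ 1 for all i; in that case the rational inverse Ψ : 𝓛* ⇢ 𝓛 of ∇ log F is given by Ψ(u) = Σᵢ₌₁ⁿ (aᵢ / u(pᵢ))·pᵢ. -/
open MvPolynomial

noncomputable section

/-- The linear form on `𝓛` with coefficient vector `w`, as a polynomial. -/
def linForm {ι : Type} [Fintype ι] [DecidableEq ι] (w : Pt ι) : MvPolynomial ι ℂ :=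
  ∑ j, MvPolynomial.C (w j) * MvPolynomial.X j

/-- The map `∇ log F : 𝓛 ⇢ 𝓛*`, `p ↦ ∇_p F / F(p)`. -/
def gradLogPoly {ι : Type} [Fintype ι] [DecidableEq ι]
    (F : MvPolynomial ι ℂ) (p : Pt ι) : Pt ι :=
  fun i => eval p (pderiv i F) / eval p F

/-- `Ψ` is a rational (two-sided, generic) inverse of `∇ log F : 𝓛 ⇢ 𝓛*`. -/
def IsGradLogInverse {ι : Type} [Fintype ι] [DecidableEq ι]
    (F : MvPolynomial ι ℂ) (Ψ : RatMap ι ι) : Prop :=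
  Generically (fun p : Pt ι =>
    eval p F ≠ 0 ∧ Ψ.isDefinedAt (gradLogPoly F p) ∧ Ψ.eval (gradLogPoly F p) = p) ∧
  Generically (fun u : Pt ι =>
    Ψ.isDefinedAt u ∧ MvPolynomial.eval (Ψ.eval u) F ≠ 0 ∧ gradLogPoly F (Ψ.eval u) = u)

/-- `F` is homaloidal: the map `∇ log F : 𝓛 ⇢ 𝓛*` is birational. -/
def IsHomaloidal {ι : Type} [Fintype ι] [DecidableEq ι] (F : MvPolynomial ι ℂ) : Prop :=
  ∃ Ψ : RatMap ι ι, IsGradLogInverse F Ψ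

end

/-!
Writing `F` in the coordinates `ℓᵢ(q)` gives `∇_q log F = ∑ᵢ (aᵢ / ℓᵢ(q)) • ℓᵢ`. Pairing with the
dual basis, `(∇_q log F)(pⱼ) = aⱼ / ℓⱼ(q)` and `ℓⱼ(Ψ u) = aⱼ / u(pⱼ)`; when every `aᵢ` is positive,
`aⱼ / (aⱼ / x) = x` makes `Ψ` and `∇ log F` mutually inverse off the coordinate hyperplanes.
If some `aᵢ = 0`, then `F` and `∇ log F` are invariant under translation by `pᵢ`, so `∇ log F`
has no generic left inverse.
-/

open Finset Matrix

section Generic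

variable {ι : Type}

namespace Generically

lemma mono {P Q : Pt ι → Prop} (hP : Generically P) (hPQ : ∀ u, P u → Q u) : Generically Q :=
  let ⟨h, hh, hP⟩ := hP
  ⟨h, hh, fun u hu => hPQ u (hP u hu)⟩

lemma and {P Q : Pt ι → Prop} (hP : Generically P) (hQ : Generically Q) :
    Generically fun u => P u ∧ Q u :=
  let ⟨g, hg, hP⟩ := hP
  let ⟨h, hh, hQ⟩ := hQ
  ⟨g * h, mul_ne_zero hg hh, fun u hu => by
    rw [map_mul] at hu
    exact ⟨hP u (left_ne_zero_of_mul hu), hQ u (right_ne_zero_of_mul hu)⟩⟩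

/-- A nonzero polynomial `h` and its translate `x ↦ h (x + v)` have a common non-root. -/
lemma exists_add {P : Pt ι → Prop} (hP : Generically P) (v : Pt ι) : ∃ x, P x ∧ P (x + v) := by
  obtain ⟨h, hh, hP⟩ := hP
  obtain ⟨h', eval_h'⟩ : ∃ h' : MvPolynomial ι ℂ, ∀ x, eval x h' = eval (x + v) h :=
    ⟨bind₁ (fun j => X j + C (v j)) h, fun x => by
      refine (eval₂Hom_bind₁ (RingHom.id ℂ) x _ h).trans ?_
      change eval _ h = _
      congr
      ext j
      simp⟩
  have hh' : h' ≠ 0 := fun h0 => hh <| MvPolynomial.funext fun z => by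
    simpa [h0] using (eval_h' (z - v)).symm
  obtain ⟨x, hx⟩ : ∃ x, eval x (h * h') ≠ 0 := by
    by_contra! H
    exact mul_ne_zero hh hh' (MvPolynomial.funext fun x => by simpa using H x)
  rw [map_mul, eval_h'] at hx
  exact ⟨x, hP x (left_ne_zero_of_mul hx), hP _ (right_ne_zero_of_mul hx)⟩

end Generically

end Generic

variable {ι : Type} [Fintype ι] [DecidableEq ι]

omit [DecidableEq ι] in
lemma dotP_eq_dotProduct (u v : Pt ι) : dotP u v = u ⬝ᵥ v := rfl

omit [DecidableEq ι] in
lemma dotP_comm (u v : Pt ι) : dotP u v = dotP v u := dotProduct_comm u v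

lemma eval_linForm (w q : Pt ι) : eval q (linForm w) = dotP w q := by
  simp [linForm, dotP]

lemma pderiv_linForm (w : Pt ι) (m : ι) : pderiv m (linForm w) = C (w m) := by
  simp [linForm, pderiv_X, Pi.single_apply]

lemma linForm_ne_zero {w : Pt ι} (hw : w ≠ 0) : linForm w ≠ 0 := by
  obtain ⟨j, hj⟩ := Function.ne_iff.mp hw
  intro h
  have hj0 := congrArg (eval (Pi.single j 1)) h
  simp only [eval_linForm, dotP_eq_dotProduct, dotProduct_single, mul_one, map_zero] at hj0
  exact hj hj0

lemma eval_prod_linForm_pow_ne_zero {κ : Type} [Fintype κ] {w : κ → Pt ι} (a : κ → ℕ)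
    {q : Pt ι} (hq : ∀ k, dotP (w k) q ≠ 0) : eval q (∏ k, linForm (w k) ^ a k) ≠ 0 := by
  simp [eval_linForm, prod_ne_zero_iff, hq]

lemma generically_forall_dotP_ne_zero {κ : Type} [Fintype κ] {w : κ → Pt ι}
    (hw : ∀ k, w k ≠ 0) : Generically fun u => ∀ k, dotP (w k) u ≠ 0 := by
  refine ⟨∏ k, linForm (w k), prod_ne_zero_iff.mpr fun k _ => linForm_ne_zero (hw k),
    fun u hu => ?_⟩
  simpa [eval_linForm, prod_ne_zero_iff] using hu

section GradLog

lemma gradLogPoly_one (q : Pt ι) : gradLogPoly 1 q = 0 := by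
  ext m; simp [gradLogPoly]

lemma gradLogPoly_mul {F G : MvPolynomial ι ℂ} {q : Pt ι} (hF : eval q F ≠ 0)
    (hG : eval q G ≠ 0) : gradLogPoly (F * G) q = gradLogPoly F q + gradLogPoly G q := by
  ext m
  simp only [gradLogPoly, Pi.add_apply, pderiv_mul, map_add, map_mul]
  field_simp

lemma gradLogPoly_prod {κ : Type} (s : Finset κ) (g : κ → MvPolynomial ι ℂ) {q : Pt ι}
    (hg : ∀ k ∈ s, eval q (g k) ≠ 0) :
    gradLogPoly (∏ k ∈ s, g k) q = ∑ k ∈ s, gradLogPoly (g k) q := by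
  classical
  induction s using Finset.induction_on with
  | empty => simp [gradLogPoly_one]
  | insert k s hk ih =>
    have hs : eval q (∏ j ∈ s, g j) ≠ 0 := by
      rw [map_prod]; exact prod_ne_zero_iff.mpr fun j hj => hg j (mem_insert_of_mem hj)
    rw [prod_insert hk, sum_insert hk, gradLogPoly_mul (hg k (mem_insert_self k s)) hs,
      ih fun j hj => hg j (mem_insert_of_mem hj)]

/-- Both sides vanish where `F` does, by the convention `x / 0 = 0`. -/
lemma gradLogPoly_pow (F : MvPolynomial ι ℂ) (n : ℕ) (q : Pt ι) :
    gradLogPoly (F ^ n) q = (n : ℂ) • gradLogPoly F q := by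
  ext m
  rcases n with _ | n
  · simp [gradLogPoly]
  rcases eq_or_ne (eval q F) 0 with hF | hF
  · simp [gradLogPoly, hF]
  simp only [gradLogPoly, pderiv_pow, map_mul, map_pow, map_natCast, Pi.smul_apply, smul_eq_mul,
    Nat.add_sub_cancel]
  field_simp
  ring

lemma gradLogPoly_linForm (w q : Pt ι) : gradLogPoly (linForm w) q = (dotP w q)⁻¹ • w := by
  ext m
  simp [gradLogPoly, pderiv_linForm, eval_linForm, div_eq_inv_mul]

lemma gradLogPoly_prod_linForm_pow {κ : Type} [Fintype κ] (w : κ → Pt ι) (a : κ → ℕ) {q : Pt ι}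
    (hq : ∀ k, dotP (w k) q ≠ 0) :
    gradLogPoly (∏ k, linForm (w k) ^ a k) q = ∑ k, ((a k : ℂ) / dotP (w k) q) • w k := by
  rw [gradLogPoly_prod _ _ fun k _ => by simp [eval_linForm, hq]]
  simp [gradLogPoly_pow, gradLogPoly_linForm, smul_smul, div_eq_mul_inv]

end GradLog

section DualBasis

variable {p l : ι → Pt ι} (hdual : ∀ i j, dotP (l i) (p j) = if i = j then (1 : ℂ) else 0)
include hdual

lemma ne_zero_of_dual_left (i : ι) : l i ≠ 0 := fun h => by simpa [h, dotP] using hdual i i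

lemma ne_zero_of_dual_right (i : ι) : p i ≠ 0 := fun h => by simpa [h, dotP] using hdual i i

lemma dotP_dual_sum_smul (c : ι → ℂ) (j : ι) : dotP (l j) (∑ i, c i • p i) = c j := by
  rw [dotP_eq_dotProduct, dotProduct_sum]
  simp [dotProduct_smul, ← dotP_eq_dotProduct, hdual]

lemma dotP_sum_smul_dual (c : ι → ℂ) (j : ι) : dotP (∑ i, c i • l i) (p j) = c j := by
  rw [dotP_eq_dotProduct, sum_dotProduct]
  simp [smul_dotProduct, ← dotP_eq_dotProduct, hdual]

lemma transpose_mul_of_dual : (Matrix.of p)ᵀ * Matrix.of l = 1 := by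
  rw [mul_eq_one_comm]
  ext i j
  simpa [Matrix.mul_apply, Matrix.one_apply, dotP] using hdual i j

lemma sum_dotP_smul_dual (u : Pt ι) : ∑ i, dotP u (p i) • l i = u :=
  calc ∑ i, dotP u (p i) • l i = u ᵥ* (Matrix.of p)ᵀ ᵥ* Matrix.of l := by
        rw [vecMul_eq_sum]; rfl
    _ = u := by rw [vecMul_vecMul, transpose_mul_of_dual hdual, vecMul_one]

lemma sum_dotP_dual_smul (q : Pt ι) : ∑ i, dotP (l i) q • p i = q := by
  have hlp : (Matrix.of l)ᵀ * Matrix.of p = 1 := by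
    simpa using congrArg transpose (transpose_mul_of_dual hdual)
  calc ∑ i, dotP (l i) q • p i = (Matrix.of l *ᵥ q) ᵥ* Matrix.of p := by
        rw [vecMul_eq_sum]; rfl
    _ = q := by rw [← vecMul_transpose, vecMul_vecMul, hlp, vecMul_one]

end DualBasis

namespace RatMap

variable {κ ι' : Type} [Fintype κ] [DecidableEq κ]

noncomputable def sumDivDotP (w : κ → Pt ι) (hw : ∀ k, w k ≠ 0) (c : κ → ℂ) (v : κ → Pt ι') :
    RatMap ι ι' where
  num j := ∑ k, C (c k * v k j) * ∏ m ∈ univ.erase k, linForm (w m)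
  den := ∏ k, linForm (w k)
  den_ne := prod_ne_zero_iff.mpr fun k _ => linForm_ne_zero (hw k)

section

variable {w : κ → Pt ι} (hw : ∀ k, w k ≠ 0) (c : κ → ℂ) (v : κ → Pt ι') {u : Pt ι}

lemma isDefinedAt_sumDivDotP : (sumDivDotP w hw c v).isDefinedAt u ↔ ∀ k, dotP u (w k) ≠ 0 := by
  simp [isDefinedAt, sumDivDotP, eval_linForm, prod_ne_zero_iff, dotP_comm u]

lemma eval_sumDivDotP (hu : ∀ k, dotP u (w k) ≠ 0) :
    (sumDivDotP w hw c v).eval u = ∑ k, (c k / dotP u (w k)) • v k := by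
  ext j
  have hd : ∀ k, MvPolynomial.eval u (linForm (w k)) = dotP u (w k) := fun k => by
    rw [eval_linForm, dotP_comm]
  simp only [RatMap.eval, sumDivDotP, map_sum, map_mul, map_prod, eval_C, hd, sum_div,
    Finset.sum_apply, Pi.smul_apply, smul_eq_mul]
  refine sum_congr rfl fun k _ => ?_
  have hrest : ∏ m ∈ univ.erase k, dotP u (w m) ≠ 0 := prod_ne_zero_iff.mpr fun m _ => hu m
  rw [← mul_prod_erase univ _ (mem_univ k)]
  field_simp [hu k]

end

lemma isGradLogInverse_sumDivDotP {F : MvPolynomial ι ℂ} {w : κ → Pt ι} (hw : ∀ k, w k ≠ 0)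
    (c : κ → ℂ)
    (hleft : Generically fun q => MvPolynomial.eval q F ≠ 0 ∧
      (∀ k, dotP (gradLogPoly F q) (w k) ≠ 0) ∧ ∑ k, (c k / dotP (gradLogPoly F q) (w k)) • w k = q)
    (hright : Generically fun u => (∀ k, dotP u (w k) ≠ 0) ∧
      MvPolynomial.eval (∑ k, (c k / dotP u (w k)) • w k) F ≠ 0 ∧
      gradLogPoly F (∑ k, (c k / dotP u (w k)) • w k) = u) :
    IsGradLogInverse F (sumDivDotP w hw c w) := by
  refine ⟨hleft.mono fun q ⟨hF, hq, hΨ⟩ => ⟨hF, (isDefinedAt_sumDivDotP hw c w).mpr hq, ?_⟩,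
    hright.mono fun u ⟨hu, hF, hΨ⟩ => ⟨(isDefinedAt_sumDivDotP hw c w).mpr hu, ?_, ?_⟩⟩
  · rwa [eval_sumDivDotP hw c w hq]
  · rwa [eval_sumDivDotP hw c w hu]
  · rwa [eval_sumDivDotP hw c w hu]

end RatMap

section DualProduct

variable {p l : ι → Pt ι} (hdual : ∀ i j, dotP (l i) (p j) = if i = j then (1 : ℂ) else 0)
  {a : ι → ℕ}
include hdual

lemma generically_gradLogPoly_sum_div_dotP_smul (ha : ∀ i, 0 < a i) :
    Generically fun u : Pt ι => (∀ i, dotP u (p i) ≠ 0) ∧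
      eval (∑ i, ((a i : ℂ) / dotP u (p i)) • p i) (∏ i, linForm (l i) ^ a i) ≠ 0 ∧
      gradLogPoly (∏ i, linForm (l i) ^ a i) (∑ i, ((a i : ℂ) / dotP u (p i)) • p i) = u := by
  refine (generically_forall_dotP_ne_zero (ne_zero_of_dual_right hdual)).mono fun u hu => ?_
  simp only [dotP_comm (p _) u] at hu
  have hcoord (j : ι) : dotP (l j) (∑ i, ((a i : ℂ) / dotP u (p i)) • p i) = a j / dotP u (p j) :=
    dotP_dual_sum_smul hdual _ j
  have hcoord_ne (j : ι) : dotP (l j) (∑ i, ((a i : ℂ) / dotP u (p i)) • p i) ≠ 0 := by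
    rw [hcoord]; exact div_ne_zero (Nat.cast_ne_zero.mpr (ha j).ne') (hu j)
  refine ⟨hu, eval_prod_linForm_pow_ne_zero a hcoord_ne, ?_⟩
  rw [gradLogPoly_prod_linForm_pow l a hcoord_ne]
  simp only [hcoord, div_div_cancel₀, ne_eq, Nat.cast_eq_zero, (ha _).ne', not_false_eq_true]
  exact sum_dotP_smul_dual hdual u

lemma generically_sum_div_dotP_gradLogPoly_smul (ha : ∀ i, 0 < a i) :
    Generically fun q : Pt ι => eval q (∏ i, linForm (l i) ^ a i) ≠ 0 ∧
      (∀ i, dotP (gradLogPoly (∏ i, linForm (l i) ^ a i) q) (p i) ≠ 0) ∧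
      ∑ i, ((a i : ℂ) / dotP (gradLogPoly (∏ i, linForm (l i) ^ a i) q) (p i)) • p i = q := by
  refine (generically_forall_dotP_ne_zero (ne_zero_of_dual_left hdual)).mono fun q hq => ?_
  have hcoord (j : ι) :
      dotP (gradLogPoly (∏ i, linForm (l i) ^ a i) q) (p j) = a j / dotP (l j) q := by
    rw [gradLogPoly_prod_linForm_pow l a hq]; exact dotP_sum_smul_dual hdual _ j
  refine ⟨eval_prod_linForm_pow_ne_zero a hq,
    fun j => hcoord j ▸ div_ne_zero (Nat.cast_ne_zero.mpr (ha j).ne') (hq j), ?_⟩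
  simp only [hcoord, div_div_cancel₀, ne_eq, Nat.cast_eq_zero, (ha _).ne', not_false_eq_true]
  exact sum_dotP_dual_smul hdual q

lemma one_le_of_isHomaloidal (hF : IsHomaloidal (∏ i, linForm (l i) ^ a i)) (i : ι) :
    1 ≤ a i := by
  obtain ⟨Ψ, hΨ, -⟩ := hF
  rw [Nat.one_le_iff_ne_zero]
  intro hai
  obtain ⟨x, ⟨⟨-, -, hx⟩, hlx⟩, ⟨-, -, hxp⟩, hlxp⟩ :=
    (hΨ.and (generically_forall_dotP_ne_zero (ne_zero_of_dual_left hdual))).exists_add (p i)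
  have hgrad : gradLogPoly (∏ i, linForm (l i) ^ a i) (x + p i) =
      gradLogPoly (∏ i, linForm (l i) ^ a i) x := by
    rw [gradLogPoly_prod_linForm_pow l a hlx, gradLogPoly_prod_linForm_pow l a hlxp]
    refine sum_congr rfl fun k _ => ?_
    rcases eq_or_ne k i with rfl | hk
    · simp [hai]
    · rw [show dotP (l k) (x + p i) = dotP (l k) x + dotP (l k) (p i) from dotProduct_add _ _ _,
        hdual k i, if_neg hk, add_zero]
  have hpi : p i = 0 := by
    simpa using (hxp.symm.trans (by rw [hgrad, hx]) : x + p i = x)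
  exact ne_zero_of_dual_right hdual i hpi

end DualProduct

theorem product_of_dual_basis_homaloidal_general {ι : Type} [Fintype ι] [DecidableEq ι]
    (p : ι → Pt ι) (l : ι → Pt ι) (a : ι → ℕ)
    (hdual : ∀ i j, dotP (l i) (p j) = if i = j then (1 : ℂ) else 0)
    (F : MvPolynomial ι ℂ) (hFdef : F = ∏ i, linForm (l i) ^ a i) :
    (IsHomaloidal F ↔ ∀ i, 1 ≤ a i) ∧
    ((∀ i, 1 ≤ a i) →
      -- `u ↦ ∑ᵢ (aᵢ / u(pᵢ)) • pᵢ` is a two-sided generic inverse of `∇ log F`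
      Generically (fun u : Pt ι =>
        (∀ i, dotP u (p i) ≠ 0) ∧
        MvPolynomial.eval (∑ i, ((a i : ℂ) / dotP u (p i)) • p i) F ≠ 0 ∧
        gradLogPoly F (∑ i, ((a i : ℂ) / dotP u (p i)) • p i) = u) ∧
      Generically (fun q : Pt ι =>
        eval q F ≠ 0 ∧ (∀ i, dotP (gradLogPoly F q) (p i) ≠ 0) ∧
        (∑ i, ((a i : ℂ) / dotP (gradLogPoly F q) (p i)) • p i) = q)) := by
  subst hFdef
  refine ⟨⟨one_le_of_isHomaloidal hdual, fun ha => ?_⟩, fun ha =>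
    ⟨generically_gradLogPoly_sum_div_dotP_smul hdual ha,
      generically_sum_div_dotP_gradLogPoly_smul hdual ha⟩⟩
  exact ⟨_, RatMap.isGradLogInverse_sumDivDotP (ne_zero_of_dual_right hdual) (fun i => (a i : ℂ))
    (generically_sum_div_dotP_gradLogPoly_smul hdual ha)
    (generically_gradLogPoly_sum_div_dotP_smul hdual ha)⟩

/-- **Lemma (products of powers of the dual basis).**
Let `(pᵢ)` be a basis of `𝓛` with dual basis `(ℓᵢ)` of `𝓛*`, and let
`F = ∏ᵢ ℓᵢ^{aᵢ}` with `aᵢ ≥ 0`.  Then `F` is homaloidal if and only if all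
`aᵢ ≥ 1`, in which case the inverse `Ψ` of `∇ log F` is
`Ψ(u) = ∑ᵢ (aᵢ / u(pᵢ)) • pᵢ`. -/
theorem product_of_dual_basis_homaloidal {ι : Type} [Fintype ι] [DecidableEq ι]
    (p : ι → Pt ι) (l : ι → Pt ι) (a : ι → ℕ)
    (hbasis : LinearIndependent ℂ p ∧ Submodule.span ℂ (Set.range p) = ⊤)
    (hdual : ∀ i j, dotP (l i) (p j) = if i = j then (1 : ℂ) else 0)
    (F : MvPolynomial ι ℂ) (hFdef : F = ∏ i, linForm (l i) ^ a i) :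
    (IsHomaloidal F ↔ ∀ i, 1 ≤ a i) ∧
    ((∀ i, 1 ≤ a i) →
      -- `u ↦ ∑ᵢ (aᵢ / u(pᵢ)) • pᵢ` is a two-sided generic inverse of `∇ log F`
      Generically (fun u : Pt ι =>
        (∀ i, dotP u (p i) ≠ 0) ∧
        MvPolynomial.eval (∑ i, ((a i : ℂ) / dotP u (p i)) • p i) F ≠ 0 ∧
        gradLogPoly F (∑ i, ((a i : ℂ) / dotP u (p i)) • p i) = u) ∧
      Generically (fun q : Pt ι =>
        eval q F ≠ 0 ∧ (∀ i, dotP (gradLogPoly F q) (p i) ≠ 0) ∧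
        (∑ i, ((a i : ℂ) / dotP (gradLogPoly F q) (p i)) • p i) = q)) :=
  product_of_dual_basis_homaloidal_general p l a hdual F hFdef
end

section
/- Let A ∪ B ∪ C be a partition of {1,…,m} and S a general positive definite real symmetric m×m matrix. Define K̂ := [S⁻¹_{A∪C}]^V + [S⁻¹_{B∪C}]^V − [S⁻¹_C]^V, where V = {1,…,m}. Then det K̂ = det(S_C) / (det(S_{A∪C})·det(S_{B∪C})). -/
noncomputable section

/-- The principal submatrix of `S` with rows and columns indexed by `D`. -/
def subm {m : ℕ} (S : Matrix (Fin m) (Fin m) ℝ) (D : Finset (Fin m)) :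
    Matrix D D ℝ :=
  S.submatrix (fun i => (i : Fin m)) (fun j => (j : Fin m))

/-- Padding a symmetric matrix indexed by `D ⊆ {1,…,m}` with zeros at all
positions having an index outside `D`. -/
def padded {m : ℕ} (D : Finset (Fin m)) (M : Matrix D D ℝ) :
    Matrix (Fin m) (Fin m) ℝ :=
  Matrix.of fun i j =>
    if hi : i ∈ D then (if hj : j ∈ D then M ⟨i, hi⟩ ⟨j, hj⟩ else 0) else 0

end

/-!
Reindex `V` as `(A ⊕ B) ⊕ C` and put `P = (S_{A∪C})⁻¹`, `Q = (S_{B∪C})⁻¹`. Then `K̂` has block form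
`[[P_AA, 0, P_AC], [0, Q_BB, Q_BC], [P_CA, Q_CB, P_CC + Q_CC - S_C⁻¹]]`. The Schur complement of
`diag(P_AA, Q_BB)` is `(P_CC - P_CA P_AA⁻¹ P_AC) + (Q_CC - Q_CB Q_BB⁻¹ Q_BC) - S_C⁻¹`, and each
bracket equals `S_C⁻¹`, because a Schur complement in an inverse matrix is the inverse of the
complementary block. Hence `det K̂ = det P_AA * det Q_BB / det S_C`, and Jacobi's identity
`det P_AA = det S_C / det S_{A∪C}` (likewise for `Q_BB`) finishes the proof.
-/

open Matrix

namespace Matrix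

variable {K : Type*} [Field K]

section TwoBlocks

variable {n k : Type*} [Fintype n] [Fintype k] [DecidableEq n] [DecidableEq k]

theorem toBlocks₁₁_inv_fromBlocks (A : Matrix n n K) (B : Matrix n k K) (C : Matrix k n K)
    (D : Matrix k k K) (hM : IsUnit (fromBlocks A B C D).det) (hD : IsUnit D.det) :
    (fromBlocks A B C D)⁻¹.toBlocks₁₁ = (A - B * D⁻¹ * C)⁻¹ := by
  let := D.invertibleOfIsUnitDet hD
  let := (fromBlocks A B C D).invertibleOfIsUnitDet hM
  let := invertibleOfFromBlocks₂₂Invertible A B C D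
  rw [← invOf_eq_nonsing_inv, invOf_fromBlocks₂₂_eq, toBlocks_fromBlocks₁₁, invOf_eq_nonsing_inv,
    invOf_eq_nonsing_inv]

theorem toBlocks₂₂_inv_fromBlocks (A : Matrix n n K) (B : Matrix n k K) (C : Matrix k n K)
    (D : Matrix k k K) (hM : IsUnit (fromBlocks A B C D).det) (hA : IsUnit A.det) :
    (fromBlocks A B C D)⁻¹.toBlocks₂₂ = (D - C * A⁻¹ * B)⁻¹ := by
  let := A.invertibleOfIsUnitDet hA
  let := (fromBlocks A B C D).invertibleOfIsUnitDet hM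
  let := invertibleOfFromBlocks₁₁Invertible A B C D
  rw [← invOf_eq_nonsing_inv, invOf_fromBlocks₁₁_eq, toBlocks_fromBlocks₂₂, invOf_eq_nonsing_inv,
    invOf_eq_nonsing_inv]

theorem det_fromBlocks_of_isUnit₂₂ (A : Matrix n n K) (B : Matrix n k K) (C : Matrix k n K)
    (D : Matrix k k K) (hD : IsUnit D.det) :
    (fromBlocks A B C D).det = D.det * (A - B * D⁻¹ * C).det := by
  let := D.invertibleOfIsUnitDet hD
  rw [det_fromBlocks₂₂, invOf_eq_nonsing_inv]

variable {U : Matrix (n ⊕ k) (n ⊕ k) K}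

/-- Jacobi's complementary minor identity. -/
theorem det_toBlocks₁₁_inv (hU : IsUnit U.det) (hD : IsUnit U.toBlocks₂₂.det) :
    U⁻¹.toBlocks₁₁.det = U.toBlocks₂₂.det / U.det := by
  obtain ⟨A, B, C, D, rfl⟩ : ∃ A B C D, U = fromBlocks A B C D :=
    ⟨_, _, _, _, (fromBlocks_toBlocks U).symm⟩
  rw [toBlocks_fromBlocks₂₂] at hD ⊢
  rw [toBlocks₁₁_inv_fromBlocks A B C D hU hD, det_fromBlocks_of_isUnit₂₂ A B C D hD,
    det_nonsing_inv, Ring.inverse_eq_inv', div_mul_cancel_left₀ hD.ne_zero]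

theorem isUnit_det_toBlocks₁₁_inv (hU : IsUnit U.det) (hD : IsUnit U.toBlocks₂₂.det) :
    IsUnit U⁻¹.toBlocks₁₁.det := by
  rw [det_toBlocks₁₁_inv hU hD]
  exact hD.ne_zero.isUnit.div hU

theorem schur_inv_eq_inv_toBlocks₂₂ (hU : IsUnit U.det) (hD : IsUnit U.toBlocks₂₂.det) :
    U⁻¹.toBlocks₂₂ - U⁻¹.toBlocks₂₁ * U⁻¹.toBlocks₁₁⁻¹ * U⁻¹.toBlocks₁₂ = U.toBlocks₂₂⁻¹ := by
  have h := toBlocks₂₂_inv_fromBlocks _ _ _ _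
    (by rwa [fromBlocks_toBlocks, isUnit_nonsing_inv_det_iff]) (isUnit_det_toBlocks₁₁_inv hU hD)
  rw [fromBlocks_toBlocks, nonsing_inv_nonsing_inv U hU] at h
  rw [h] at hD ⊢
  rw [nonsing_inv_nonsing_inv _ (isUnit_nonsing_inv_det_iff.mp hD)]

end TwoBlocks

section Glue

variable {α β γ : Type*} [Fintype α] [Fintype β] [Fintype γ] [DecidableEq α] [DecidableEq β]
  [DecidableEq γ]

/-- The type-level form of `[P]^V + [Q]^V - [R]^V` for `V = (α ⊕ β) ⊕ γ`. -/
def glue (P : Matrix (α ⊕ γ) (α ⊕ γ) K) (Q : Matrix (β ⊕ γ) (β ⊕ γ) K) (R : Matrix γ γ K) :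
    Matrix ((α ⊕ β) ⊕ γ) ((α ⊕ β) ⊕ γ) K :=
  fromBlocks (fromBlocks P.toBlocks₁₁ 0 0 Q.toBlocks₁₁) (fromRows P.toBlocks₁₂ Q.toBlocks₁₂)
    (fromCols P.toBlocks₂₁ Q.toBlocks₂₁) (P.toBlocks₂₂ + Q.toBlocks₂₂ - R)

theorem det_glue (P : Matrix (α ⊕ γ) (α ⊕ γ) K) (Q : Matrix (β ⊕ γ) (β ⊕ γ) K)
    (R : Matrix γ γ K) (hP : IsUnit P.toBlocks₁₁.det) (hQ : IsUnit Q.toBlocks₁₁.det) :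
    (glue P Q R).det = P.toBlocks₁₁.det * Q.toBlocks₁₁.det *
      ((P.toBlocks₂₂ - P.toBlocks₂₁ * P.toBlocks₁₁⁻¹ * P.toBlocks₁₂) +
        (Q.toBlocks₂₂ - Q.toBlocks₂₁ * Q.toBlocks₁₁⁻¹ * Q.toBlocks₁₂) - R).det := by
  let := P.toBlocks₁₁.invertibleOfIsUnitDet hP
  let := Q.toBlocks₁₁.invertibleOfIsUnitDet hQ
  let := fromBlocksZero₂₁Invertible P.toBlocks₁₁ 0 Q.toBlocks₁₁
  rw [glue, det_fromBlocks₁₁, det_fromBlocks_zero₂₁, invOf_fromBlocks_zero₂₁_eq,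
    fromCols_mul_fromBlocks, fromCols_mul_fromRows]
  simp only [invOf_eq_nonsing_inv, Matrix.mul_zero, Matrix.zero_mul, add_zero, zero_add, neg_zero]
  congr 2
  abel

theorem det_glue_inv {U : Matrix (α ⊕ γ) (α ⊕ γ) K} {V : Matrix (β ⊕ γ) (β ⊕ γ) K}
    {D : Matrix γ γ K} (hU : IsUnit U.det) (hV : IsUnit V.det) (hUD : U.toBlocks₂₂ = D)
    (hVD : V.toBlocks₂₂ = D) (hD : IsUnit D.det) :
    (glue U⁻¹ V⁻¹ D⁻¹).det = D.det / (U.det * V.det) := by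
  subst hUD
  have hD' : IsUnit V.toBlocks₂₂.det := hVD ▸ hD
  rw [det_glue _ _ _ (isUnit_det_toBlocks₁₁_inv hU hD) (isUnit_det_toBlocks₁₁_inv hV hD'),
    schur_inv_eq_inv_toBlocks₂₂ hU hD, schur_inv_eq_inv_toBlocks₂₂ hV hD',
    det_toBlocks₁₁_inv hU hD, det_toBlocks₁₁_inv hV hD', hVD, add_sub_cancel_right,
    det_nonsing_inv, Ring.inverse_eq_inv']
  field_simp [hD.ne_zero]

end Glue

end Matrix

section Partition

variable {ι : Type*} [Fintype ι] [DecidableEq ι] {A B C : Finset ι}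

def Finset.partitionEquiv (hAB : Disjoint A B) (hAC : Disjoint A C) (hBC : Disjoint B C)
    (hunion : A ∪ B ∪ C = Finset.univ) : (A ⊕ B) ⊕ C ≃ ι :=
  ((Equiv.sumCongr (Equiv.Finset.union A B hAB) (Equiv.refl C)).trans
    (Equiv.Finset.union (A ∪ B) C (Finset.disjoint_union_left.mpr ⟨hAC, hBC⟩))).trans
    (Equiv.subtypeUnivEquiv (Finset.eq_univ_iff_forall.mp hunion))

end Partition

theorem padded_add_padded_sub_padded_submatrix {m : ℕ} {A B C : Finset (Fin m)}
    (hAB : Disjoint A B) (hAC : Disjoint A C) (hBC : Disjoint B C)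
    (hunion : A ∪ B ∪ C = Finset.univ) (M : Matrix ↥(A ∪ C) ↥(A ∪ C) ℝ)
    (N : Matrix ↥(B ∪ C) ↥(B ∪ C) ℝ) (R : Matrix C C ℝ) :
    (padded (A ∪ C) M + padded (B ∪ C) N - padded C R).submatrix
        (Finset.partitionEquiv hAB hAC hBC hunion) (Finset.partitionEquiv hAB hAC hBC hunion) =
      glue (M.submatrix (Equiv.Finset.union A C hAC) (Equiv.Finset.union A C hAC))
        (N.submatrix (Equiv.Finset.union B C hBC) (Equiv.Finset.union B C hBC)) R := by
  ext ((i | i) | i) ((j | j) | j) <;>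
    simp [glue, padded, Finset.partitionEquiv, toBlocks₁₁, toBlocks₁₂, toBlocks₂₁, toBlocks₂₂,
      Finset.disjoint_left.mp hAB, Finset.disjoint_left.mp hAC, Finset.disjoint_left.mp hBC,
      Finset.disjoint_right.mp hAB, Finset.disjoint_right.mp hAC, Finset.disjoint_right.mp hBC]

/-- **Lemma (determinant formula for a decomposition).**
Let `A ∪ B ∪ C` be a partition of `{1,…,m}` and `S` a positive definite symmetric
real `m×m` matrix.  With `K̂ := [S⁻¹_{A∪C}]^V + [S⁻¹_{B∪C}]^V − [S⁻¹_C]^V` we have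
`det K̂ = det S_C / (det S_{A∪C} · det S_{B∪C})`. -/
theorem det_of_padded_inverses {m : ℕ} (A B C : Finset (Fin m))
    (hAB : Disjoint A B) (hAC : Disjoint A C) (hBC : Disjoint B C)
    (hunion : A ∪ B ∪ C = Finset.univ)
    (S : Matrix (Fin m) (Fin m) ℝ) (hS : S.PosDef) :
    (padded (A ∪ C) (subm S (A ∪ C))⁻¹ + padded (B ∪ C) (subm S (B ∪ C))⁻¹
        - padded C (subm S C)⁻¹).det
      = (subm S C).det / ((subm S (A ∪ C)).det * (subm S (B ∪ C)).det) := by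
  have hsub : ∀ D, (subm S D).PosDef := fun D => hS.submatrix Subtype.coe_injective
  have hU := ((hsub (A ∪ C)).submatrix (Equiv.Finset.union A C hAC).injective).det_pos.ne'.isUnit
  have hV := ((hsub (B ∪ C)).submatrix (Equiv.Finset.union B C hBC).injective).det_pos.ne'.isUnit
  rw [← det_submatrix_equiv_self (Finset.partitionEquiv hAB hAC hBC hunion),
    padded_add_padded_sub_padded_submatrix, ← inv_submatrix_equiv, ← inv_submatrix_equiv,
    det_glue_inv (D := subm S C) hU hV rfl rfl (hsub C).det_pos.ne'.isUnit,
    det_submatrix_equiv_self, det_submatrix_equiv_self]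
end

section
/- Let G = (V,E) be a directed acyclic graph and S a general positive definite symmetric |V|×|V| matrix. Define K̂ := Σ_{v∈V} K_{[v|pa(v)]}, where K_{[v|pa(v)]} := [S⁻¹_{{v}∪pa(v)}]^V − [S⁻¹_{pa(v)}]^V. Then det K̂ = ∏_{v∈V} det(S_{pa(v)}) / det(S_{{v}∪pa(v)}). -/
noncomputable section

/-- The set of parents of a node `v` in the directed graph `E`. -/
def parents {m : ℕ} (E : Fin m → Fin m → Prop) [DecidableRel E] (v : Fin m) :
    Finset (Fin m) :=
  Finset.univ.filter (fun i => E i v)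

end

/-!
For `v ∉ A`, adjoining `v` changes the padded inverse by a rank-one term:
`[S⁻¹_{A∪v}]^V - [S⁻¹_A]^V = s⁻¹ b bᵀ`, where `b = e_v - [S_A⁻¹]^V S e_v` is the residual of
regressing `v` on `A` and `s = S_vv - S_vA S_A⁻¹ S_Av` is the Schur complement, which also satisfies
`det S_{A∪v} = s · det S_A`. Taking `A = pa(v)`, this gives `K̂ = Bᵀ diag(s_v⁻¹) B`, where the row
`b_v` of `B` is supported on `{v} ∪ pa(v)` with `b_v v = 1`. Listing the vertices in a topological
order of the DAG makes `B` unitriangular, so `det K̂ = ∏ s_v⁻¹`.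
-/

open Matrix Finset

theorem Matrix.det_eq_prod_diag_of_rank {ι R : Type*} [Fintype ι] [DecidableEq ι] [CommRing R]
    (M : Matrix ι ι R) (r : ι → ℕ) (hM : ∀ i j, i ≠ j → r i ≤ r j → M i j = 0) :
    M.det = ∏ i, M i i := by
  let key : ι → ℕ ×ₗ Fin (Fintype.card ι) := fun i => toLex (r i, Fintype.equivFin ι i)
  have hkey : Function.Injective key := fun i j h => by
    simpa [key] using congrArg (fun p => (ofLex p).2) h
  let _ : LinearOrder ι := LinearOrder.lift' key hkey
  refine det_of_isLowerTriangular M fun i j (hij : i < j) => hM i j hij.ne ?_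
  rcases Prod.Lex.lt_iff.mp (show key i < key j from hij) with h | ⟨h, -⟩
  · exact h.le
  · exact h.le

theorem Matrix.transpose_mul_diagonal_mul {ι κ R : Type*} [Fintype ι] [DecidableEq ι]
    [CommSemiring R] (B : Matrix ι κ R) (c : ι → R) :
    Bᵀ * diagonal c * B = ∑ i, c i • vecMulVec (B i) (B i) := by
  ext j k
  rw [Matrix.mul_assoc, mul_apply]
  simp [diagonal_mul, sum_apply, vecMulVec_apply, mul_left_comm]

theorem Relation.card_transGen_lt_of_rel {α : Type*} [Fintype α] {r : α → α → Prop}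
    [DecidableRel (Relation.TransGen r)] (hr : ∀ a, ¬ Relation.TransGen r a a) {a b : α}
    (hab : r a b) :
    #{x | Relation.TransGen r x a} < #{x | Relation.TransGen r x b} := by
  refine card_lt_card ⟨fun x hx => ?_, fun hsub => hr a ?_⟩
  · simp only [mem_filter, mem_univ, true_and] at hx ⊢
    exact hx.tail hab
  · simpa using hsub (by simpa using Relation.TransGen.single hab)

theorem Finset.sum_eq_sum_subtype_of_support {α M : Type*} [Fintype α] [AddCommMonoid M]
    {D : Finset α} {f : α → M} (hf : ∀ i ∉ D, f i = 0) : ∑ i, f i = ∑ i : D, f i := by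
  rw [sum_coe_sort]
  exact (sum_subset (subset_univ D) fun i _ hi => hf i hi).symm

section Padded

variable {m : ℕ} {D : Finset (Fin m)}

theorem padded_apply_of_mem (M : Matrix D D ℝ) {i j : Fin m} (hi : i ∈ D) (hj : j ∈ D) :
    padded D M i j = M ⟨i, hi⟩ ⟨j, hj⟩ := by
  simp [padded, hi, hj]

theorem padded_apply_eq_zero (M : Matrix D D ℝ) {i j : Fin m} (h : i ∉ D ∨ j ∉ D) :
    padded D M i j = 0 := by
  rcases h with h | h <;> simp [padded, h]

theorem padded_transpose (M : Matrix D D ℝ) : (padded D M)ᵀ = padded D Mᵀ := by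
  ext i j
  by_cases hi : i ∈ D <;> by_cases hj : j ∈ D <;> simp [padded, hi, hj]

theorem padded_subm_eq_self {M : Matrix (Fin m) (Fin m) ℝ}
    (hM : ∀ i j, i ∉ D ∨ j ∉ D → M i j = 0) : padded D (subm M D) = M := by
  ext i j
  by_cases hi : i ∈ D <;> by_cases hj : j ∈ D <;> simp [padded, subm, hi, hj, hM]

theorem padded_mul_apply (M : Matrix D D ℝ) (N : Matrix (Fin m) (Fin m) ℝ) {i j : Fin m}
    (hi : i ∈ D) (hj : j ∈ D) : (padded D M * N) i j = (M * subm N D) ⟨i, hi⟩ ⟨j, hj⟩ := by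
  rw [mul_apply, mul_apply, sum_eq_sum_subtype_of_support fun k hk => by
    rw [padded_apply_eq_zero M (.inr hk), zero_mul]]
  exact sum_congr rfl fun k _ => by rw [padded_apply_of_mem M hi k.2]; rfl

theorem mul_padded_mul_apply (N : Matrix (Fin m) (Fin m) ℝ) (M : Matrix D D ℝ)
    (N' : Matrix (Fin m) (Fin m) ℝ) (i j : Fin m) :
    (N * padded D M * N') i j = ∑ a : D, ∑ b : D, N i a * M a b * N' b j := by
  simp only [mul_apply, sum_mul]
  rw [sum_comm, sum_eq_sum_subtype_of_support (D := D) fun k hk => sum_eq_zero fun l _ => by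
    simp [padded_apply_eq_zero M (.inl hk)]]
  refine sum_congr rfl fun a _ => ?_
  rw [sum_eq_sum_subtype_of_support (D := D) fun l hl => by
    simp [padded_apply_eq_zero M (.inr hl)]]
  exact sum_congr rfl fun b _ => by rw [padded_apply_of_mem M a.2 b.2]

end Padded

section PaddedInverse

variable {m : ℕ} {S : Matrix (Fin m) (Fin m) ℝ} {D : Finset (Fin m)}

noncomputable def paddedInv (S : Matrix (Fin m) (Fin m) ℝ) (D : Finset (Fin m)) :
    Matrix (Fin m) (Fin m) ℝ :=
  padded D (subm S D)⁻¹

theorem isUnit_det_subm (hS : S.PosDef) (D : Finset (Fin m)) : IsUnit (subm S D).det :=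
  (hS.submatrix Subtype.val_injective).det_pos.ne'.isUnit

theorem paddedInv_mul_apply_of_notMem_left {i : Fin m} (hi : i ∉ D) (j : Fin m) :
    (paddedInv S D * S) i j = 0 := by
  simp [paddedInv, mul_apply, padded_apply_eq_zero _ (.inl hi)]

theorem paddedInv_mul_apply_of_mem_right (hD : IsUnit (subm S D).det) (i : Fin m) {j : Fin m}
    (hj : j ∈ D) : (paddedInv S D * S) i j = (1 : Matrix (Fin m) (Fin m) ℝ) i j := by
  by_cases hi : i ∈ D
  · simp [paddedInv, padded_mul_apply _ _ hi hj, nonsing_inv_mul _ hD, one_apply]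
  · rw [paddedInv_mul_apply_of_notMem_left hi, one_apply_ne fun h : i = j => hi (h ▸ hj)]

theorem paddedInv_transpose (hS : S.IsSymm) (D : Finset (Fin m)) :
    (paddedInv S D)ᵀ = paddedInv S D := by
  rw [paddedInv, padded_transpose, transpose_nonsing_inv]
  congr 2
  exact (hS.submatrix _).eq

theorem mul_paddedInv_mul_apply_of_mem (hS : S.IsSymm) (hD : IsUnit (subm S D).det) {j : Fin m}
    (hj : j ∈ D) (k : Fin m) : (S * paddedInv S D * S) j k = S j k := by
  have hSP : S * paddedInv S D = (paddedInv S D * S)ᵀ := by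
    rw [transpose_mul, paddedInv_transpose hS, hS.eq]
  rw [hSP, mul_apply]
  simp [paddedInv_mul_apply_of_mem_right hD _ hj, one_apply]

theorem eq_paddedInv_of_mul_apply {M : Matrix (Fin m) (Fin m) ℝ}
    (hM : ∀ i j, i ∉ D ∨ j ∉ D → M i j = 0)
    (hMS : ∀ i, ∀ j ∈ D, (M * S) i j = (1 : Matrix (Fin m) (Fin m) ℝ) i j) :
    M = paddedInv S D := by
  have hinv : subm M D * subm S D = 1 := by
    ext i j
    rw [← padded_subm_eq_self hM] at hMS
    rw [← padded_mul_apply _ _ i.2 j.2, hMS _ _ j.2]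
    simp only [one_apply, Subtype.ext_iff]
  rw [paddedInv, inv_eq_left_inv hinv, padded_subm_eq_self hM]

end PaddedInverse

section Schur

variable {m : ℕ} {S : Matrix (Fin m) (Fin m) ℝ} {A : Finset (Fin m)} {v : Fin m}

noncomputable def residualVec (S : Matrix (Fin m) (Fin m) ℝ) (A : Finset (Fin m)) (v : Fin m) :
    Fin m → ℝ :=
  fun i => (1 - paddedInv S A * S) i v

noncomputable def schurCompl (S : Matrix (Fin m) (Fin m) ℝ) (A : Finset (Fin m)) (v : Fin m) :
    ℝ :=
  (S - S * paddedInv S A * S) v v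

theorem det_subm_insert (hA : IsUnit (subm S A).det) (hv : v ∉ A) :
    (subm S (insert v A)).det = schurCompl S A v * (subm S A).det := by
  let e : A ⊕ Unit ≃ ↥(insert v A) :=
    ((subtypeInsertEquivOption hv).trans (Equiv.optionEquivSumPUnit A)).symm
  have hblocks : (subm S (insert v A)).submatrix e e =
      fromBlocks (subm S A) (of fun a _ => S a v) (of fun _ a => S v a) (of fun _ _ => S v v) := by
    ext (a | _) (b | _) <;> rfl
  have := invertibleOfIsUnitDet _ hA
  rw [← det_submatrix_equiv_self e, hblocks, det_fromBlocks₁₁, invOf_eq_nonsing_inv, mul_comm]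
  congr 1
  rw [det_unique, schurCompl, paddedInv]
  simp only [Matrix.sub_apply]
  rw [mul_padded_mul_apply, sum_comm]
  simp [mul_apply, sum_mul]

theorem schurCompl_ne_zero (hA : IsUnit (subm S A).det) (hD : IsUnit (subm S (insert v A)).det)
    (hv : v ∉ A) : schurCompl S A v ≠ 0 :=
  left_ne_zero_of_mul (det_subm_insert hA hv ▸ hD.ne_zero)

theorem residualVec_self (hv : v ∉ A) : residualVec S A v v = 1 := by
  simp [residualVec, paddedInv_mul_apply_of_notMem_left hv]

theorem residualVec_eq_zero {i : Fin m} (hi : i ∉ insert v A) : residualVec S A v i = 0 := by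
  obtain ⟨hiv, hiA⟩ : i ≠ v ∧ i ∉ A := by simpa using hi
  simp [residualVec, paddedInv_mul_apply_of_notMem_left hiA, one_apply, hiv]

theorem mulVec_residualVec_apply (hS : S.IsSymm) (hA : IsUnit (subm S A).det) {j : Fin m}
    (hj : j ∈ insert v A) :
    (S *ᵥ residualVec S A v) j = if j = v then schurCompl S A v else 0 := by
  have hSb : (S *ᵥ residualVec S A v) j = (S - S * paddedInv S A * S) j v := by
    change (S * (1 - paddedInv S A * S)) j v = _
    rw [Matrix.mul_sub, Matrix.mul_one, Matrix.mul_assoc]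
  split_ifs with hjv
  · rw [hSb, hjv, schurCompl]
  · have hjA : j ∈ A := (mem_insert.mp hj).resolve_left hjv
    rw [hSb, Matrix.sub_apply, mul_paddedInv_mul_apply_of_mem hS hA hjA, sub_self]

theorem paddedInv_insert (hS : S.IsSymm) (hA : IsUnit (subm S A).det)
    (hD : IsUnit (subm S (insert v A)).det) (hv : v ∉ A) :
    paddedInv S (insert v A) = paddedInv S A
      + (schurCompl S A v)⁻¹ • vecMulVec (residualVec S A v) (residualVec S A v) := by
  set b := residualVec S A v
  refine (eq_paddedInv_of_mul_apply (fun i j hij => ?_) fun i j hj => ?_).symm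
  · have hb : b i * b j = 0 := by
      rcases hij with h | h <;> simp [b, residualVec_eq_zero h]
    have hP : paddedInv S A i j = 0 :=
      padded_apply_eq_zero _ (hij.imp (mt mem_insert_of_mem) (mt mem_insert_of_mem))
    simp [hP, vecMulVec_apply, hb]
  · have hbS : b ᵥ* S = S *ᵥ b := by rw [← hS.eq, vecMul_transpose, hS.eq]
    rw [add_mul, smul_mul, vecMulVec_mul, hbS, Matrix.add_apply, Matrix.smul_apply,
      vecMulVec_apply, mulVec_residualVec_apply hS hA hj]
    split_ifs with hjv
    · subst hjv
      rw [smul_eq_mul, mul_left_comm, inv_mul_cancel₀ (schurCompl_ne_zero hA hD hv), mul_one]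
      simp [b, residualVec]
    · rw [mul_zero, smul_zero, add_zero,
        paddedInv_mul_apply_of_mem_right hA i ((mem_insert.mp hj).resolve_left hjv)]

end Schur

/-- **Lemma (determinant formula for DAGs).**
Let `G = (V, E)` be a directed acyclic graph and `S` a positive definite symmetric
`|V|×|V|` matrix.  With
`K̂ := ∑_{v∈V} ([S⁻¹_{{v}∪pa(v)}]^V − [S⁻¹_{pa(v)}]^V)` we have
`det K̂ = ∏_{v∈V} det S_{pa(v)} / det S_{{v}∪pa(v)}`. -/
theorem det_of_dag_padded_inverses {m : ℕ} (E : Fin m → Fin m → Prop) [DecidableRel E]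
    (hacyclic : ∀ v, ¬ Relation.TransGen E v v)
    (S : Matrix (Fin m) (Fin m) ℝ) (hS : S.PosDef) :
    (∑ v : Fin m,
        (padded (insert v (parents E v)) (subm S (insert v (parents E v)))⁻¹
          - padded (parents E v) (subm S (parents E v))⁻¹)).det
      = ∏ v : Fin m, (subm S (parents E v)).det / (subm S (insert v (parents E v))).det := by
  classical
  have hsymm : S.IsSymm := isHermitian_iff_isSymm.mp hS.isHermitian
  have hpa : ∀ v, v ∉ parents E v := fun v hv =>
    hacyclic v (.single (by simpa [parents] using hv))
  let B : Matrix (Fin m) (Fin m) ℝ := fun v => residualVec S (parents E v) v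
  have hsum : ∑ v, (paddedInv S (insert v (parents E v)) - paddedInv S (parents E v))
      = Bᵀ * diagonal (fun v => (schurCompl S (parents E v) v)⁻¹) * B := by
    rw [transpose_mul_diagonal_mul]
    refine sum_congr rfl fun v _ => ?_
    rw [paddedInv_insert hsymm (isUnit_det_subm hS _) (isUnit_det_subm hS _) (hpa v),
      add_sub_cancel_left]
  have hB : B.det = 1 := by
    rw [det_eq_prod_diag_of_rank B (fun v => #{i | Relation.TransGen E i v})]
    · simp [B, residualVec_self (hpa _)]
    · intro v i hvi hle
      refine residualVec_eq_zero ?_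
      simp only [parents, mem_insert, mem_filter, mem_univ, true_and, not_or]
      exact ⟨hvi.symm, fun hE => (Relation.card_transGen_lt_of_rel hacyclic hE).not_ge hle⟩
  change (∑ v, (paddedInv S (insert v (parents E v)) - paddedInv S (parents E v))).det = _
  rw [hsum, det_mul, det_mul, det_transpose, hB, det_diagonal, one_mul, mul_one]
  refine prod_congr rfl fun v _ => ?_
  rw [det_subm_insert (isUnit_det_subm hS _) (hpa v),
    div_mul_cancel_right₀ (isUnit_det_subm hS _).ne_zero]
end

section
/- Let 𝓛 be a finite-dimensional ℂ-vector space, F a homogeneous polynomial on 𝓛, and g ∈ SL(𝓛) a linear automorphism such that F is invariant under the action of g. If X ⊆ ℙ(𝓛) is a projective variety with MLD_F(X) = 1, then MLD_F(g·X) = 1, and the associated solutions of the homaloidal PDE satisfy Φ_{g·X,𝓛,F} = Φ_{X,𝓛,F} ∘ gᵀ, where gᵀ : 𝓛* → 𝓛* is the transpose map u ↦ u ∘ g. -/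
open MvPolynomial

/-! The linear automorphism `g` transports all the data of the likelihood problem. Substituting
`g` into polynomials identifies the vanishing ideal of `g·C` with that of `C`, and the chain rule
`∇(f ∘ g)(p) = gᵀ ∇f(g p)` then gives `T_{g p}(g·C) = g T_p C`; so `g` preserves the smooth locus
and, since `F ∘ g = F`, `p` is a critical point of `ℓ_{F, gᵀ u}` on `C` exactly when `g p` is one
of `ℓ_{F, u}` on `g·C`. The critical set of `g·C` at `u` is thus the image under `g` of the critical
set of `C` at `gᵀ u`, the genericity hypersurface is pulled back along `gᵀ`, and `F` takes the
same value at corresponding critical points. -/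

noncomputable section

open MvPolynomial Matrix

variable {ι : Type}

lemma Generically.mono_s18 {P Q : Pt ι → Prop} (hP : Generically P) (hPQ : ∀ u, P u → Q u) :
    Generically Q :=
  let ⟨h, h0, hh⟩ := hP
  ⟨h, h0, fun u hu => hPQ u (hh u hu)⟩

variable [Fintype ι]

def linearSubst (M : Matrix ι ι ℂ) : MvPolynomial ι ℂ →ₐ[ℂ] MvPolynomial ι ℂ :=
  aeval fun j => ∑ k, C (M j k) * X k

lemma eval_linearSubst (M : Matrix ι ι ℂ) (f : MvPolynomial ι ℂ) (x : Pt ι) :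
    eval x (linearSubst M f) = eval (M *ᵥ x) f := by
  rw [linearSubst, aeval_def, eval₂_comp_left, eval, coe_eval₂Hom]
  congr 1
  · ext; simp
  · funext j; simp [mulVec, dotProduct]

lemma linearSubst_linearSubst (M N : Matrix ι ι ℂ) (f : MvPolynomial ι ℂ) :
    linearSubst M (linearSubst N f) = linearSubst (N * M) f :=
  MvPolynomial.funext fun x => by simp only [eval_linearSubst, mulVec_mulVec]

lemma linearSubst_mem_vanIdeal_iff (M : Matrix ι ι ℂ) (X : Set (Pt ι)) (f : MvPolynomial ι ℂ) :
    linearSubst M f ∈ vanIdeal X ↔ f ∈ vanIdeal ((M *ᵥ ·) '' X) := by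
  simp [vanIdeal, eval_linearSubst]

lemma dotP_transpose_mulVec (M : Matrix ι ι ℂ) (a v : Pt ι) :
    dotP (Mᵀ *ᵥ a) v = dotP a (M *ᵥ v) := by
  change (Mᵀ *ᵥ a) ⬝ᵥ v = a ⬝ᵥ M *ᵥ v
  rw [mulVec_transpose, dotProduct_mulVec]

lemma dotL_apply (u v : Pt ι) : dotL u v = dotP u v := by
  simp [dotL, dotP, LinearMap.sum_apply]

lemma mem_tangentSpace_iff (X : Set (Pt ι)) (p v : Pt ι) :
    v ∈ tangentSpace X p ↔ ∀ f ∈ vanIdeal X, dotP (gradP f p) v = 0 := by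
  simp [tangentSpace, Submodule.mem_iInf, dotL_apply]

variable [DecidableEq ι]

lemma linearSubst_one (f : MvPolynomial ι ℂ) : linearSubst 1 f = f :=
  MvPolynomial.funext fun x => by rw [eval_linearSubst, one_mulVec]

lemma linearSubst_injective (M : Matrix ι ι ℂ) [Invertible M] :
    Function.Injective (linearSubst M) :=
  Function.LeftInverse.injective (g := linearSubst (⅟M)) fun f => by
    rw [linearSubst_linearSubst, mul_invOf_self, linearSubst_one]

lemma linearSubst_surjective (M : Matrix ι ι ℂ) [Invertible M] :
    Function.Surjective (linearSubst M) :=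
  Function.RightInverse.surjective (g := linearSubst (⅟M)) fun f => by
    rw [linearSubst_linearSubst, invOf_mul_self, linearSubst_one]

lemma Generically.comp_mulVec {P : Pt ι → Prop} (hP : Generically P) (M : Matrix ι ι ℂ)
    [Invertible M] : Generically fun u => P (M *ᵥ u) := by
  obtain ⟨h, h0, hh⟩ := hP
  refine ⟨linearSubst M h, ?_, fun u hu => hh _ ?_⟩
  · rwa [ne_eq, ← map_zero (linearSubst M), (linearSubst_injective M).eq_iff]
  · rwa [eval_linearSubst] at hu

lemma pderiv_linearSubst (M : Matrix ι ι ℂ) (i : ι) (f : MvPolynomial ι ℂ) :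
    pderiv i (linearSubst M f) = ∑ j, C (M j i) * linearSubst M (pderiv j f) := by
  induction f using MvPolynomial.induction_on with
  | C a => simp [linearSubst]
  | add p q hp hq => simp only [map_add, hp, hq, mul_add, Finset.sum_add_distrib]
  | mul_X p k hp =>
    have hX : pderiv i (linearSubst M (X k)) = C (M k i) := by
      simp [linearSubst, pderiv_X, Pi.single_apply]
    simp only [map_mul, pderiv_mul, hp, hX, pderiv_X, Pi.single_apply, mul_ite, mul_one, mul_zero,
      map_add, mul_add, Finset.sum_add_distrib, Finset.sum_mul, apply_ite (linearSubst M), map_zero,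
      Finset.sum_ite_eq, Finset.mem_univ, if_true]
    congr 1
    · exact Finset.sum_congr rfl fun j _ => by ring
    · ring

lemma gradP_linearSubst (M : Matrix ι ι ℂ) (f : MvPolynomial ι ℂ) (p : Pt ι) :
    gradP (linearSubst M f) p = Mᵀ *ᵥ gradP f (M *ᵥ p) := by
  funext i
  simp [gradP, pderiv_linearSubst, eval_linearSubst, mulVec, dotProduct]

lemma dotP_gradP_linearSubst (M : Matrix ι ι ℂ) (f : MvPolynomial ι ℂ) (p v : Pt ι) :
    dotP (gradP (linearSubst M f) p) v = dotP (gradP f (M *ᵥ p)) (M *ᵥ v) := by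
  rw [gradP_linearSubst, dotP_transpose_mulVec]

section Invertible

variable (M : Matrix ι ι ℂ) [Invertible M]

lemma mulVec_mem_tangentSpace_image_iff (X : Set (Pt ι)) (p v : Pt ι) :
    M *ᵥ v ∈ tangentSpace ((M *ᵥ ·) '' X) (M *ᵥ p) ↔ v ∈ tangentSpace X p := by
  simp only [mem_tangentSpace_iff]
  conv_rhs => rw [(linearSubst_surjective M).forall]
  simp only [linearSubst_mem_vanIdeal_iff, dotP_gradP_linearSubst]

lemma tangentSpace_image (X : Set (Pt ι)) (p : Pt ι) :
    tangentSpace ((M *ᵥ ·) '' X) (M *ᵥ p) =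
      (tangentSpace X p).map (M.toLinearEquiv' ‹_› : Pt ι →ₗ[ℂ] Pt ι) := by
  ext v
  obtain ⟨w, rfl⟩ := (M.toLinearEquiv' ‹_›).surjective v
  rw [Submodule.mem_map_equiv, LinearEquiv.symm_apply_apply]
  exact mulVec_mem_tangentSpace_image_iff M X p w

lemma finrank_tangentSpace_image (X : Set (Pt ι)) (p : Pt ι) :
    Module.finrank ℂ (tangentSpace ((M *ᵥ ·) '' X) (M *ᵥ p)) =
      Module.finrank ℂ (tangentSpace X p) := by
  rw [tangentSpace_image, LinearEquiv.finrank_map_eq]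

lemma mulVec_mem_smoothLocus_image_iff (X : Set (Pt ι)) (p : Pt ι) :
    M *ᵥ p ∈ smoothLocus ((M *ᵥ ·) '' X) ↔ p ∈ smoothLocus X := by
  simp only [smoothLocus, Set.mem_ofPred_eq, (mulVec_injective_of_invertible M).mem_set_image,
    Set.forall_mem_image, finrank_tangentSpace_image]

variable {M} {F : MvPolynomial ι ℂ}

lemma isCriticalPoint_image_iff (hF : ∀ x, eval (M *ᵥ x) F = eval x F)
    (X : Set (Pt ι)) (u p : Pt ι) :
    IsCriticalPoint ((M *ᵥ ·) '' X) F u (M *ᵥ p) ↔ IsCriticalPoint X F (Mᵀ *ᵥ u) p := by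
  have hFM : linearSubst M F = F := MvPolynomial.funext fun x => by rw [eval_linearSubst, hF]
  have hgrad (w : Pt ι) : dotP (gradP F p) w = dotP (gradP F (M *ᵥ p)) (M *ᵥ w) := by
    rw [← dotP_gradP_linearSubst, hFM]
  have htangent (P : Pt ι → Prop) :
      (∀ v ∈ tangentSpace ((M *ᵥ ·) '' X) (M *ᵥ p), P v) ↔
        ∀ w ∈ tangentSpace X p, P (M *ᵥ w) := by
    conv_lhs => rw [(mulVec_surjective_of_invertible M).forall]
    simp only [mulVec_mem_tangentSpace_image_iff]
  simp only [IsCriticalPoint, mulVec_mem_smoothLocus_image_iff, hF, htangent, hgrad,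
    dotP_transpose_mulVec]

lemma setOf_isCriticalPoint_image (hF : ∀ x, eval (M *ᵥ x) F = eval x F)
    (X : Set (Pt ι)) (u : Pt ι) :
    {p | IsCriticalPoint ((M *ᵥ ·) '' X) F u p} =
      (M *ᵥ ·) '' {p | IsCriticalPoint X F (Mᵀ *ᵥ u) p} := by
  ext p'
  obtain ⟨p, rfl⟩ := mulVec_surjective_of_invertible M p'
  rw [Set.mem_ofPred_eq, isCriticalPoint_image_iff hF,
    (mulVec_injective_of_invertible M).mem_set_image, Set.mem_ofPred_eq]

end Invertible

end

theorem sl_invariance_of_mld_one_general {ι : Type} [Fintype ι] [DecidableEq ι]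
    (C : Set (Pt ι)) (F : MvPolynomial ι ℂ)
    (g : Matrix ι ι ℂ) (hdet : g.det = 1)
    (hinv : ∀ x : Pt ι, MvPolynomial.eval (g.mulVec x) F = MvPolynomial.eval x F)
    (hmld : MLDegreeIs C F 1) :
    MLDegreeIs ((fun x => g.mulVec x) '' C) F 1 ∧
    Generically (fun u : Pt ι =>
      ∀ p p' : Pt ι,
        IsCriticalPoint C F (g.transpose.mulVec u) p →
        IsCriticalPoint ((fun x => g.mulVec x) '' C) F u p' →
        MvPolynomial.eval p' F = MvPolynomial.eval p F) := by
  let : Invertible g := g.invertibleOfIsUnitDet (hdet ▸ isUnit_one)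
  have hcrit := setOf_isCriticalPoint_image hinv C
  have hgen := hmld.comp_mulVec g.transpose
  refine ⟨hgen.mono_s18 fun u hu => ?_, hgen.mono_s18 fun u hu p p' hp hp' => ?_⟩
  · rwa [hcrit, Set.ncard_image_of_injective _ (Matrix.mulVec_injective_of_invertible g)]
  · obtain ⟨a, ha⟩ := Set.ncard_eq_one.mp hu
    have hpa : p = a := by
      rw [← Set.mem_singleton_iff, ← ha]
      exact hp
    have hp'a : p' = g.mulVec a := by
      rw [← Set.mem_singleton_iff, ← Set.image_singleton (f := fun x => g.mulVec x), ← ha, ← hcrit]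
      exact hp'
    rw [hp'a, hinv, hpa]

/-- **Proposition (SL-equivariance of ML degree one and its PDE solution).**
Let `F` be a homogeneous polynomial on `𝓛` invariant under `g ∈ SL(𝓛)`, and let
`X ⊆ ℙ(𝓛)` (with affine cone `C`) satisfy `MLD_F(X) = 1`.  Then
`MLD_F(g·X) = 1`, and the associated solutions of the homaloidal PDE satisfy
`Φ_{g·X,𝓛,F} = Φ_{X,𝓛,F} ∘ gᵀ`; i.e. for general `u`, the value of `F` at the
maximum likelihood estimate of `g·X` at `u` equals the value of `F` at the
maximum likelihood estimate of `X` at `gᵀ(u)`. -/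
theorem sl_invariance_of_mld_one {ι : Type} [Fintype ι] [DecidableEq ι]
    (C : Set (Pt ι)) (F : MvPolynomial ι ℂ) (dF : ℕ)
    (hvar : IsAffineVariety C) (hcone : IsCone C) (hF : F.IsHomogeneous dF)
    (g : Matrix ι ι ℂ) (hdet : g.det = 1)
    (hinv : ∀ x : Pt ι, MvPolynomial.eval (g.mulVec x) F = MvPolynomial.eval x F)
    (hmld : MLDegreeIs C F 1) :
    MLDegreeIs ((fun x => g.mulVec x) '' C) F 1 ∧
    Generically (fun u : Pt ι =>
      ∀ p p' : Pt ι,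
        IsCriticalPoint C F (g.transpose.mulVec u) p →
        IsCriticalPoint ((fun x => g.mulVec x) '' C) F u p' →
        MvPolynomial.eval p' F = MvPolynomial.eval p F) :=
  sl_invariance_of_mld_one_general C F g hdet hinv hmld
end
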